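/- arXiv:1506.07552 — 5 statements merged into one kernel-verified Lean document; each statement's English description precedes it below -/
import Mathlib

section
/- (Lemma 1) Under Assumptions 1–3 on the distributed SGD process with effective stepsize 2/(λ((k−1)n+j)), define a_k := E[‖w^k − w*‖²] (with a_0 := ‖w^0 − w*‖²) and b_k := E[‖w_{1,n+1}^k − w*‖²] (the mean-squared error of thread 1's local output at the end of iteration k). Then for every integer k ≥ 0, b_{k+1} ≤ (k²/(k+1)²)·a_k + β₁/((k+1)²·n), where β₁ := 4G²/λ². -/
open MeasureTheory ProbabilityTheory
open scoped RealInnerProductSpace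

section Helpers

variable {E : Type*} [NormedAddCommGroup E] [InnerProductSpace ℝ E]

private lemma projK_inner_le {K : Set E} (hK : Convex ℝ K) {P : E → E}
    (hP : ∀ v, P v ∈ K ∧ ∀ u ∈ K, ‖v - P v‖ ≤ ‖v - u‖) (v : E) {u : E} (hu : u ∈ K) :
    ⟪v - P v, u - P v⟫ ≤ 0 := by
  haveI : Nonempty K := ⟨⟨P v, (hP v).1⟩⟩
  have heq : ‖v - P v‖ = ⨅ w : K, ‖v - (w : E)‖ := by
    apply le_antisymm
    · exact le_ciInf fun u => (hP v).2 u u.2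
    · exact ciInf_le ⟨0, by rintro b ⟨u, rfl⟩; exact norm_nonneg _⟩ (⟨P v, (hP v).1⟩ : K)
  exact (norm_eq_iInf_iff_real_inner_le_zero hK (hP v).1).1 heq u hu

private lemma projK_dist_le {K : Set E} (hK : Convex ℝ K) {P : E → E}
    (hP : ∀ v, P v ∈ K ∧ ∀ u ∈ K, ‖v - P v‖ ≤ ‖v - u‖) (v : E) {u : E} (hu : u ∈ K) :
    ‖P v - u‖ ≤ ‖v - u‖ := by
  have h1 : ⟪v - P v, u - P v⟫ ≤ 0 := projK_inner_le hK hP v hu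
  have h2 : ‖v - u‖ ^ 2 = ‖v - P v‖ ^ 2 + 2 * ⟪v - P v, P v - u⟫ + ‖P v - u‖ ^ 2 := by
    rw [show v - u = (v - P v) + (P v - u) by abel, norm_add_sq_real]
  have h3 : ⟪v - P v, P v - u⟫ = - ⟪v - P v, u - P v⟫ := by
    rw [← inner_neg_right]; congr 1; abel
  have h4 : ‖P v - u‖ ^ 2 ≤ ‖v - u‖ ^ 2 := by nlinarith [sq_nonneg ‖v - P v‖]
  calc ‖P v - u‖ = Real.sqrt (‖P v - u‖ ^ 2) := (Real.sqrt_sq (norm_nonneg _)).symm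
    _ ≤ Real.sqrt (‖v - u‖ ^ 2) := Real.sqrt_le_sqrt h4
    _ = ‖v - u‖ := Real.sqrt_sq (norm_nonneg _)

private lemma projK_lipschitz {K : Set E} (hK : Convex ℝ K) {P : E → E}
    (hP : ∀ v, P v ∈ K ∧ ∀ u ∈ K, ‖v - P v‖ ≤ ‖v - u‖) :
    LipschitzWith 1 P := by
  refine LipschitzWith.of_dist_le_mul fun v u => ?_
  rw [NNReal.coe_one, one_mul, dist_eq_norm, dist_eq_norm]
  have h1 : ⟪v - P v, P u - P v⟫ ≤ 0 := projK_inner_le hK hP v (hP u).1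
  have h2 : ⟪u - P u, P v - P u⟫ ≤ 0 := projK_inner_le hK hP u (hP v).1
  have e : ⟪v - u, P v - P u⟫
      = ⟪v - P v, P v - P u⟫ + ⟪P u - u, P v - P u⟫ + ⟪P v - P u, P v - P u⟫ := by
    rw [← inner_add_left, ← inner_add_left]
    congr 1
    abel
  have h5 : ⟪v - P v, P v - P u⟫ = - ⟪v - P v, P u - P v⟫ := by
    rw [← inner_neg_right]; congr 1; abel
  have h6 : ⟪P u - u, P v - P u⟫ = - ⟪u - P u, P v - P u⟫ := by
    rw [← inner_neg_left]; congr 1; abel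
  have h7 : ‖P v - P u‖ ^ 2 ≤ ⟪v - u, P v - P u⟫ := by
    have h8 : ⟪P v - P u, P v - P u⟫ = ‖P v - P u‖ ^ 2 := real_inner_self_eq_norm_sq _
    rw [e, h5, h6, h8]
    linarith
  have h8 := real_inner_le_norm (v - u) (P v - P u)
  rcases (norm_nonneg (P v - P u)).eq_or_lt with h0 | h0
  · rw [← h0]; exact norm_nonneg _
  · nlinarith

private lemma contDiff_grad [CompleteSpace E] {φ : E → ℝ} (h : ContDiff ℝ 2 φ) :
    ContDiff ℝ 1 (gradient φ) :=
  ((InnerProductSpace.toDual ℝ E).symm.contDiff).comp (h.fderiv_right (by norm_num))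

end Helpers


set_option maxHeartbeats 2000000 in
/-- Lemma 1: Under Assumptions 1–3 on the distributed SGD process with effective
stepsize `2/(λ((k−1)n+j))`, with `a_k := E[‖w^k − w*‖²]` and
`b_k := E[‖w_{1,n+1}^k − w*‖²]` (thread 1's local output at the end of iteration `k`),
for every `k ≥ 0`: `b_{k+1} ≤ (k²/(k+1)²)·a_k + β₁/((k+1)²·n)` where `β₁ := 4G²/λ²`. -/
theorem stmt_2 {d : ℕ} (m n : ℕ) (hm : 0 < m) (hn : 0 < n)
    (S : Finset (EuclideanSpace ℝ (Fin d))) (hS : S.Nonempty)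
    (ℓ : EuclideanSpace ℝ (Fin d) → EuclideanSpace ℝ (Fin d) → ℝ)
    (hsmooth : ∀ x ∈ S, ContDiff ℝ 2 (fun w => ℓ w x))
    (L : EuclideanSpace ℝ (Fin d) → ℝ)
    (hLdef : L = fun w => (S.card : ℝ)⁻¹ * ∑ x ∈ S, ℓ w x)
    -- Assumption 1: compact convex feasible set of diameter `R`, optimum interior
    (W : Set (EuclideanSpace ℝ (Fin d)))
    (hWconv : Convex ℝ W) (hWcomp : IsCompact W) (hWne : W.Nonempty)
    (R : ℝ) (hdiam : Metric.diam W ≤ R)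
    (wstar : EuclideanSpace ℝ (Fin d)) (hwstarW : wstar ∈ W)
    (hwstarMin : ∀ u ∈ W, L wstar ≤ L u)
    (ρ : ℝ) (hρ : 0 < ρ) (hinterior : Metric.ball wstar ρ ⊆ W)
    -- Assumption 2: smoothness constants `H`, `G`, `M`
    (H G M : ℝ)
    (hH : ∀ v ∈ W, ∀ x ∈ S,
      ‖fderiv ℝ (gradient (fun u => ℓ u x)) v - fderiv ℝ (gradient (fun u => ℓ u x)) wstar‖
        ≤ H * ‖v - wstar‖)
    (hG : ∀ v ∈ W, ∀ x ∈ S, ‖gradient (fun u => ℓ u x) v‖ ≤ G)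
    (hM : ∀ v ∈ W, ∀ x ∈ S, ‖fderiv ℝ (gradient (fun u => ℓ u x)) v‖ ≤ M)
    -- Assumption 3: `λ`-strong convexity of `L` on `W`
    (lam : ℝ) (hlam : 0 < lam)
    (hstrong : ∀ v ∈ W, ∀ u : EuclideanSpace ℝ (Fin d),
      lam * ‖u‖ ^ 2 ≤ ⟪fderiv ℝ (gradient L) v u, u⟫)
    -- the ball `B` of diameter `D := λ/(4(H + G/ρ²))` containing `w*`
    (c : EuclideanSpace ℝ (Fin d)) (B : Set (EuclideanSpace ℝ (Fin d)))
    (hBdef : B = Metric.closedBall c (lam / (4 * (H + G / ρ ^ 2)) / 2))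
    (hwstarB : wstar ∈ B)
    -- nearest-point projections onto `W` and `B`
    (projW : EuclideanSpace ℝ (Fin d) → EuclideanSpace ℝ (Fin d))
    (hprojW : ∀ v, projW v ∈ W ∧ ∀ u ∈ W, ‖v - projW v‖ ≤ ‖v - u‖)
    (projB : EuclideanSpace ℝ (Fin d) → EuclideanSpace ℝ (Fin d))
    (hprojB : ∀ v, projB v ∈ B ∧ ∀ u ∈ B, ‖v - projB v‖ ≤ ‖v - u‖)
    {Ω : Type} [MeasurableSpace Ω] (μ : Measure Ω) [IsProbabilityMeasure μ]
    (X : ℕ → Fin m → ℕ → Ω → EuclideanSpace ℝ (Fin d))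
    (hXmeas : ∀ k i j, Measurable (X k i j))
    (hXindep : iIndepFun (m := fun _ => inferInstance)
      (fun p : ℕ × Fin m × ℕ => X p.1 p.2.1 p.2.2) μ)
    (hXunif : ∀ k i j, Measure.map (X k i j) μ
      = (S.card : ENNReal)⁻¹ • ∑ s ∈ S, (Measure.dirac s : Measure (EuclideanSpace ℝ (Fin d))))
    (w : ℕ → Ω → EuclideanSpace ℝ (Fin d))
    (wloc : ℕ → Fin m → ℕ → Ω → EuclideanSpace ℝ (Fin d))
    (hwmeas : ∀ k, Measurable (w k))
    (hwlocmeas : ∀ k i j, Measurable (wloc k i j))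
    (w0 : EuclideanSpace ℝ (Fin d)) (hw0B : w0 ∈ B)
    (hw0 : ∀ ω, w 0 ω = w0)
    (hinit : ∀ k i ω, wloc (k + 1) i 1 ω = w k ω)
    (hupdate : ∀ k i j, 1 ≤ j → j ≤ n → ∀ ω,
      wloc (k + 1) i (j + 1) ω
        = projW (wloc (k + 1) i j ω
            - (2 / (lam * ((k : ℝ) * n + j)))
              • gradient (fun u => ℓ u (X (k + 1) i j ω)) (wloc (k + 1) i j ω)))
    (hsync : ∀ k ω,
      w (k + 1) ω = projB ((m : ℝ)⁻¹ • ∑ i : Fin m, wloc (k + 1) i (n + 1) ω)) :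
    ∀ k : ℕ,
      ∫ ω, ‖wloc (k + 1) ⟨0, hm⟩ (n + 1) ω - wstar‖ ^ 2 ∂μ
        ≤ ((k : ℝ) ^ 2 / ((k : ℝ) + 1) ^ 2) * ∫ ω, ‖w k ω - wstar‖ ^ 2 ∂μ
          + (4 * G ^ 2 / lam ^ 2) / (((k : ℝ) + 1) ^ 2 * n) := by
  intro k
  classical
  rcases Nat.eq_zero_or_pos d with hd | hd
  · subst hd
    have e0 : ∀ v u : EuclideanSpace ℝ (Fin 0), ‖v - u‖ ^ 2 = (0:ℝ) := by
      intro v u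
      rw [Subsingleton.elim (v - u) 0, norm_zero]
      norm_num
    simp only [e0, integral_zero, mul_zero, zero_add]
    positivity
  -- ============ Part A : analytic facts ============
  have hcard0 : 0 < S.card := hS.card_pos
  have hcard : (0:ℝ) < (S.card : ℝ) := by exact_mod_cast hcard0
  have hsum2 : ContDiff ℝ 2 (fun w => ∑ x ∈ S, ℓ w x) := ContDiff.sum fun x hx => hsmooth x hx
  have hL2 : ContDiff ℝ 2 L := by rw [hLdef]; exact contDiff_const.mul hsum2
  have hldiffAt : ∀ x ∈ S, ∀ v, DifferentiableAt ℝ (fun u => ℓ u x) v :=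
    fun x hx v => ((hsmooth x hx).differentiable two_ne_zero).differentiableAt
  have hgradL : ∀ v, gradient L v = (S.card : ℝ)⁻¹ • ∑ x ∈ S, gradient (fun u => ℓ u x) v := by
    intro v
    have hfd : fderiv ℝ L v = (S.card:ℝ)⁻¹ • ∑ x ∈ S, fderiv ℝ (fun u => ℓ u x) v := by
      rw [hLdef]
      rw [fderiv_const_mul ((hsum2.differentiable two_ne_zero).differentiableAt)]
      rw [fderiv_fun_sum fun x hx => hldiffAt x hx v]
    show (InnerProductSpace.toDual ℝ _).symm (fderiv ℝ L v) = _
    rw [hfd, _root_.map_smul, _root_.map_sum]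
    rfl
  have hgradl_cont : ∀ x ∈ S, Continuous (gradient (fun u => ℓ u x)) :=
    fun x hx => (contDiff_grad (hsmooth x hx)).continuous
  have hgradL_cont : Continuous (gradient L) := (contDiff_grad hL2).continuous
  have hGnn : 0 ≤ G := le_trans (norm_nonneg _) (hG wstar hwstarW hS.choose hS.choose_spec)
  have hgradLle : ∀ v ∈ W, ‖gradient L v‖ ≤ G := by
    intro v hv
    have h1 : ‖∑ x ∈ S, gradient (fun u => ℓ u x) v‖ ≤ (S.card : ℝ) * G := by
      refine le_trans (norm_sum_le _ _) ?_
      calc ∑ x ∈ S, ‖gradient (fun u => ℓ u x) v‖ ≤ ∑ _x ∈ S, G :=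
            Finset.sum_le_sum fun x hx => hG v hv x hx
        _ = (S.card : ℝ) * G := by rw [Finset.sum_const, nsmul_eq_mul]
    calc ‖gradient L v‖ = (S.card:ℝ)⁻¹ * ‖∑ x ∈ S, gradient (fun u => ℓ u x) v‖ := by
          rw [hgradL v, norm_smul, Real.norm_eq_abs, abs_of_nonneg (by positivity)]
      _ ≤ (S.card:ℝ)⁻¹ * ((S.card:ℝ) * G) := by
          exact mul_le_mul_of_nonneg_left h1 (by positivity)
      _ = G := by field_simp
  have hgrad0 : gradient L wstar = 0 := by
    have hlm : IsLocalMin L wstar := by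
      have hb : Metric.ball wstar ρ ∈ nhds wstar := Metric.ball_mem_nhds _ hρ
      exact Filter.eventually_of_mem hb fun u hu => hwstarMin u (hinterior hu)
    have h0 : fderiv ℝ L wstar = 0 := hlm.fderiv_eq_zero
    show (InnerProductSpace.toDual ℝ _).symm (fderiv ℝ L wstar) = 0
    rw [h0, map_zero]
  have hmono : ∀ v ∈ W, lam * ‖v - wstar‖ ^ 2 ≤ ⟪gradient L v, v - wstar⟫ := by
    intro v hv
    rcases eq_or_ne v wstar with rfl | hne
    · simp
    · set e := v - wstar with he
      have hgdiff : Differentiable ℝ (gradient L) := (contDiff_grad hL2).differentiable one_ne_zero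
      have hc : ∀ t : ℝ, HasDerivAt (fun s : ℝ => wstar + s • e) e t := by
        intro t
        simpa using ((hasDerivAt_id t).smul_const e).const_add wstar
      have hkeyd : ∀ t : ℝ, HasDerivAt (fun s : ℝ => ⟪gradient L (wstar + s • e), e⟫)
          (⟪fderiv ℝ (gradient L) (wstar + t • e) e, e⟫) t := by
        intro t
        have h2 : HasDerivAt (fun s : ℝ => gradient L (wstar + s • e))
            (fderiv ℝ (gradient L) (wstar + t • e) e) t :=
          HasFDerivAt.comp_hasDerivAt t ((hgdiff _).hasFDerivAt) (hc t)
        simpa using h2.inner ℝ (hasDerivAt_const t e)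
      have hcont : ContinuousOn (fun s : ℝ => ⟪gradient L (wstar + s • e), e⟫) (Set.Icc 0 1) :=
        (Continuous.inner (hgradL_cont.comp (continuous_const.add
          (continuous_id.smul continuous_const))) continuous_const).continuousOn
      obtain ⟨t0, ht0, hslope⟩ := exists_hasDerivAt_eq_slope
        (fun s : ℝ => ⟪gradient L (wstar + s • e), e⟫)
        (fun t => ⟪fderiv ℝ (gradient L) (wstar + t • e) e, e⟫)
        one_pos hcont (fun t _ => hkeyd t)
      have hmem : wstar + t0 • e ∈ W := by
        have hcomb : wstar + t0 • e = (1 - t0) • wstar + t0 • v := by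
          rw [he, smul_sub, sub_smul, one_smul]; abel
        rw [hcomb]
        exact hWconv hwstarW hv (by linarith [ht0.2]) (le_of_lt ht0.1) (by ring)
      have hslope' : ⟪fderiv ℝ (gradient L) (wstar + t0 • e) e, e⟫ = ⟪gradient L v, e⟫ := by
        rw [hslope]
        have e1 : wstar + (1:ℝ) • e = v := by rw [one_smul, he]; abel
        have e0' : wstar + (0:ℝ) • e = wstar := by rw [zero_smul, add_zero]
        rw [e1, e0', hgrad0]
        simp
      have hst := hstrong _ hmem e
      rw [hslope'] at hst
      exact hst
  have hWdist : ∀ v ∈ W, ‖v - wstar‖ ≤ G / lam := by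
    intro v hv
    rcases (norm_nonneg (v - wstar)).eq_or_lt with h0 | h0
    · rw [← h0]; positivity
    · have h1 := hmono v hv
      have h2 : ⟪gradient L v, v - wstar⟫ ≤ G * ‖v - wstar‖ :=
        le_trans (real_inner_le_norm _ _)
          (mul_le_mul_of_nonneg_right (hgradLle v hv) (norm_nonneg _))
      rw [le_div_iff₀ hlam]
      nlinarith
  have hex : ∃ v ∈ W, ‖v - wstar‖ = ρ / 2 := by
    refine ⟨wstar + (ρ/2) • EuclideanSpace.single (⟨0, hd⟩ : Fin d) (1:ℝ), ?_, ?_⟩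
    · apply hinterior
      rw [Metric.mem_ball, dist_eq_norm]
      have e1 : wstar + (ρ/2) • EuclideanSpace.single (⟨0, hd⟩ : Fin d) (1:ℝ) - wstar
          = (ρ/2) • EuclideanSpace.single (⟨0, hd⟩ : Fin d) (1:ℝ) := by abel
      rw [e1, norm_smul, EuclideanSpace.norm_single, norm_one, mul_one,
        Real.norm_eq_abs, abs_of_pos (by positivity)]
      linarith
    · have e1 : wstar + (ρ/2) • EuclideanSpace.single (⟨0, hd⟩ : Fin d) (1:ℝ) - wstar
          = (ρ/2) • EuclideanSpace.single (⟨0, hd⟩ : Fin d) (1:ℝ) := by abel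
      rw [e1, norm_smul, EuclideanSpace.norm_single, norm_one, mul_one,
        Real.norm_eq_abs, abs_of_pos (by positivity)]
  obtain ⟨v₀, hv₀W, hv₀⟩ := hex
  have hlamρ : lam * (ρ/2) ≤ G := by
    have h1 := hWdist v₀ hv₀W
    rw [hv₀, le_div_iff₀ hlam] at h1
    linarith
  have hGpos : 0 < G := lt_of_lt_of_le (by positivity) hlamρ
  have hHnn : 0 ≤ H := by
    have h1 := hH v₀ hv₀W hS.choose hS.choose_spec
    have h2 : (0:ℝ) ≤ H * ‖v₀ - wstar‖ := le_trans (norm_nonneg _) h1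
    rw [hv₀] at h2
    nlinarith
  have hBW : B ⊆ W := by
    intro v hv
    apply hinterior
    rw [hBdef, Metric.mem_closedBall] at hv
    have hwB' : dist wstar c ≤ lam / (4 * (H + G / ρ ^ 2)) / 2 := by
      rw [hBdef, Metric.mem_closedBall] at hwstarB; exact hwstarB
    rw [Metric.mem_ball]
    have hden : 0 < H + G / ρ^2 := by positivity
    have hd2 : dist v wstar ≤ lam / (4 * (H + G / ρ ^ 2)) := by
      have := dist_triangle v c wstar
      rw [dist_comm c wstar] at this
      linarith
    have hlam2 : lam ≤ 2*G/ρ := by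
      rw [le_div_iff₀ hρ]
      nlinarith
    have e2 : 2*G/ρ = 2*ρ*(G/ρ^2) := by field_simp
    have hDle : lam / (4 * (H + G / ρ^2)) ≤ ρ / 2 := by
      rw [div_le_iff₀ (by positivity)]
      nlinarith [mul_nonneg hHnn hρ.le]
    linarith
  -- ============ Part B : process facts ============
  have hwB : ∀ k' ω, w k' ω ∈ B := by
    intro k'
    induction k' with
    | zero => intro ω; rw [hw0]; exact hw0B
    | succ k' ih => intro ω; rw [hsync]; exact (hprojB _).1
  have hlocW : ∀ k' (i : Fin m) j, 1 ≤ j → j ≤ n + 1 → ∀ ω, wloc (k' + 1) i j ω ∈ W := by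
    intro k' i j hj1 hj2 ω
    cases j with
    | zero => omega
    | succ jj =>
      cases jj with
      | zero => rw [hinit]; exact hBW (hwB k' ω)
      | succ jjj =>
        rw [hupdate k' i (jjj+1) (by omega) (by omega)]
        exact (hprojW _).1
  have hBconv : Convex ℝ B := by rw [hBdef]; exact convex_closedBall _ _
  -- ============ Part C : sigma algebras, representation, independence ============
  have hXS : ∀ p : ℕ × Fin m × ℕ, ∀ᵐ ω ∂μ, X p.1 p.2.1 p.2.2 ω ∈ S := by
    intro p
    have hSm : MeasurableSet (↑S : Set (EuclideanSpace ℝ (Fin d))) := S.measurableSet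
    rw [ae_iff]
    have he : {ω | ¬ X p.1 p.2.1 p.2.2 ω ∈ S}
        = X p.1 p.2.1 p.2.2 ⁻¹' (↑S : Set (EuclideanSpace ℝ (Fin d)))ᶜ := by
      ext ω; simp
    rw [he, ← Measure.map_apply (hXmeas p.1 p.2.1 p.2.2) hSm.compl, hXunif]
    rw [Measure.smul_apply]
    have hz : (∑ s ∈ S, (Measure.dirac s : Measure (EuclideanSpace ℝ (Fin d))))
        ((↑S : Set (EuclideanSpace ℝ (Fin d)))ᶜ) = 0 := by
      rw [Measure.finset_sum_apply]
      refine Finset.sum_eq_zero fun s hs => ?_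
      rw [Measure.dirac_apply' _ hSm.compl]
      simp [hs]
    rw [hz, smul_zero]
  set T : ℕ → ℕ → Set (ℕ × Fin m × ℕ) := fun k' j =>
    {p | p.1 ≤ k' ∨ (p.1 = k' + 1 ∧ p.2.2 < j)} with hT
  set F : ℕ → ℕ → MeasurableSpace Ω := fun k' j =>
    ⨆ p ∈ T k' j, MeasurableSpace.comap (X p.1 p.2.1 p.2.2) inferInstance with hF
  have hFle : ∀ k' j, F k' j ≤ ‹MeasurableSpace Ω› := by
    intro k' j
    exact iSup₂_le fun p _ => (hXmeas p.1 p.2.1 p.2.2).comap_le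
  have hFmono : ∀ {k1 j1 k2 j2}, T k1 j1 ⊆ T k2 j2 → F k1 j1 ≤ F k2 j2 :=
    fun h => biSup_mono h
  have hTj : ∀ k' {j1 j2}, j1 ≤ j2 → T k' j1 ⊆ T k' j2 := by
    intro k' j1 j2 h p hp
    simp only [hT, Set.mem_setOf_eq] at hp ⊢
    rcases hp with h1 | ⟨h1, h2⟩
    · exact Or.inl h1
    · exact Or.inr ⟨h1, lt_of_lt_of_le h2 h⟩
  have hTk : ∀ k', T k' (n+1) ⊆ T (k'+1) 0 := by
    intro k' p hp
    simp only [hT, Set.mem_setOf_eq] at hp ⊢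
    rcases hp with h1 | ⟨h1, _⟩
    · exact Or.inl (by omega)
    · exact Or.inl (by omega)
  have hindep : ∀ (k' j : ℕ) (q : ℕ × Fin m × ℕ), q ∉ T k' j →
      ∀ (f : Ω → EuclideanSpace ℝ (Fin d)), Measurable[F k' j] f →
        IndepFun (X q.1 q.2.1 q.2.2) f μ := by
    intro k' j q hq f hf
    have hii : iIndep (fun p : ℕ × Fin m × ℕ =>
        MeasurableSpace.comap (X p.1 p.2.1 p.2.2) inferInstance) μ :=
      (iIndepFun_iff_iIndep _ _ _).1 hXindep
    have hI := indep_biSup_compl (fun p => (hXmeas p.1 p.2.1 p.2.2).comap_le) hii ((T k' j)ᶜ)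
    rw [compl_compl] at hI
    rw [IndepFun_iff_Indep]
    refine indep_of_indep_of_le_right (indep_of_indep_of_le_left hI ?_) ?_
    · exact le_biSup (fun p : ℕ × Fin m × ℕ =>
        MeasurableSpace.comap (X p.1 p.2.1 p.2.2)
          (inferInstance : MeasurableSpace (EuclideanSpace ℝ (Fin d)))) hq
    · exact hf.comap_le
  have hloc : ∀ k', (∃ f : Ω → EuclideanSpace ℝ (Fin d), Measurable[F k' 0] f ∧ f =ᵐ[μ] w k') →
      ∀ (i : Fin m) (j : ℕ), 1 ≤ j → j ≤ n + 1 →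
        ∃ f : Ω → EuclideanSpace ℝ (Fin d), Measurable[F k' j] f ∧ f =ᵐ[μ] wloc (k' + 1) i j := by
    rintro k' ⟨f0, hf0m, hf0e⟩ i j
    induction j with
    | zero => intro h; omega
    | succ jj ih =>
      intro hj1 hj2
      rcases Nat.eq_zero_or_pos jj with h0 | h0
      · subst h0
        refine ⟨f0, hf0m.mono (hFmono (hTj k' (Nat.zero_le 1))) le_rfl, ?_⟩
        filter_upwards [hf0e] with ω hω
        rw [hinit k' i ω]
        exact hω
      · obtain ⟨f, hfm, hfe⟩ := ih h0 (by omega)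
        refine ⟨fun ω =>
          projW (f ω - (2 / (lam * ((k' : ℝ) * (n : ℝ) + (jj : ℝ)))) •
            (∑ x ∈ S, Set.indicator {ω' | X (k' + 1) i jj ω' = x}
              (fun ω' => gradient (fun u => ℓ u x) (f ω')) ω)), ?_, ?_⟩
        · have hfm' : Measurable[F k' (jj+1)] f :=
            hfm.mono (hFmono (hTj k' (Nat.le_succ jj))) le_rfl
          have hsetm : ∀ x : EuclideanSpace ℝ (Fin d),
              MeasurableSet[F k' (jj+1)] {ω' | X (k' + 1) i jj ω' = x} := by
            intro x
            have hqmem : ((k' + 1, i, jj) : ℕ × Fin m × ℕ) ∈ T k' (jj+1) :=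
              Or.inr ⟨rfl, Nat.lt_succ_self jj⟩
            have hle : MeasurableSpace.comap (X (k' + 1) i jj) inferInstance ≤ F k' (jj+1) := by
              have := le_biSup (fun p : ℕ × Fin m × ℕ =>
                MeasurableSpace.comap (X p.1 p.2.1 p.2.2)
                  (inferInstance : MeasurableSpace (EuclideanSpace ℝ (Fin d)))) hqmem
              exact this
            exact hle _ ⟨{x}, measurableSet_singleton x, rfl⟩
          refine Measurable.comp (projK_lipschitz hWconv hprojW).continuous.measurable ?_
          refine Measurable.sub hfm' ?_
          refine Measurable.fun_const_smul ?_ _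
          refine Finset.measurable_sum _ fun x hx => ?_
          refine Measurable.indicator ?_ (hsetm x)
          exact ((hgradl_cont x hx).measurable).comp hfm'
        · filter_upwards [hfe, hXS (k' + 1, i, jj)] with ω hω hXω
          have hsum : (∑ x ∈ S, Set.indicator {ω' | X (k' + 1) i jj ω' = x}
              (fun ω' => gradient (fun u => ℓ u x) (f ω')) ω)
              = gradient (fun u => ℓ u (X (k' + 1) i jj ω)) (f ω) := by
            rw [Finset.sum_eq_single (X (k' + 1) i jj ω)]
            · simp [Set.indicator_apply]
            · intro x hx hne
              have hnot : ω ∉ {ω' | X (k' + 1) i jj ω' = x} := fun h => hne h.symm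
              exact Set.indicator_of_notMem hnot _
            · intro hnot; exact absurd hXω hnot
          rw [hsum, hω]
          exact (hupdate k' i jj h0 (by omega) ω).symm
  have hwrep : ∀ k', ∃ f : Ω → EuclideanSpace ℝ (Fin d),
      Measurable[F k' 0] f ∧ f =ᵐ[μ] w k' := by
    intro k'
    induction k' with
    | zero =>
      exact ⟨fun _ => w0, measurable_const, Filter.Eventually.of_forall fun ω => (hw0 ω).symm⟩
    | succ k' ih =>
      have h2 : ∀ i : Fin m, ∃ f, Measurable[F k' (n+1)] f ∧ f =ᵐ[μ] wloc (k' + 1) i (n + 1) :=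
        fun i => hloc k' ih i (n + 1) (by omega) le_rfl
      choose ff hffm hffe using h2
      refine ⟨fun ω => projB ((m : ℝ)⁻¹ • ∑ i : Fin m, ff i ω), ?_, ?_⟩
      · refine Measurable.comp (projK_lipschitz hBconv hprojB).continuous.measurable ?_
        refine Measurable.fun_const_smul ?_ _
        exact Finset.measurable_sum _ fun i _ => (hffm i).mono (hFmono (hTk k')) le_rfl
      · have hall : ∀ᵐ ω ∂μ, ∀ i, ff i ω = wloc (k' + 1) i (n + 1) ω := ae_all_iff.2 hffe
        filter_upwards [hall] with ω hω
        rw [hsync k' ω]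
        have hsum : (∑ i : Fin m, ff i ω) = ∑ i : Fin m, wloc (k' + 1) i (n + 1) ω :=
          Finset.sum_congr rfl fun i _ => hω i
        rw [hsum]
  -- ============ Part D : one-step estimate ============
  have hIb : ∀ (f : Ω → ℝ), Measurable f → ∀ C : ℝ, (∀ ω, |f ω| ≤ C) → Integrable f μ := by
    intro f hf C hC
    exact (integrable_const C).mono' hf.aestronglyMeasurable
      (Filter.Eventually.of_forall fun ω => by simpa [Real.norm_eq_abs] using hC ω)
  have hkey : ∀ j : ℕ, 1 ≤ j → j ≤ n →
      ∫ ω, ‖wloc (k+1) ⟨0, hm⟩ (j+1) ω - wstar‖ ^ 2 ∂μ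
        ≤ (1 - 4 / ((k:ℝ)*(n:ℝ) + (j:ℝ))) * ∫ ω, ‖wloc (k+1) ⟨0, hm⟩ j ω - wstar‖ ^ 2 ∂μ
          + (4 * G^2 / lam^2) / ((k:ℝ)*(n:ℝ) + (j:ℝ))^2 := by
    intro j hj1 hjn
    set i0 : Fin m := ⟨0, hm⟩ with hi0
    have ht1 : 1 ≤ (k:ℝ)*(n:ℝ) + (j:ℝ) := by
      have h1 : (1:ℝ) ≤ (j:ℝ) := by exact_mod_cast hj1
      have h2 : (0:ℝ) ≤ (k:ℝ)*(n:ℝ) := by positivity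
      linarith
    set t : ℝ := (k:ℝ)*(n:ℝ) + (j:ℝ) with htdef
    have ht0 : 0 < t := lt_of_lt_of_le one_pos ht1
    set η : ℝ := 2 / (lam * t) with hηdef
    have hηpos : 0 < η := by positivity
    have hWjW : ∀ ω, wloc (k+1) i0 j ω ∈ W := fun ω => hlocW k i0 j hj1 (by omega) ω
    have hWjd : ∀ ω, ‖wloc (k+1) i0 j ω - wstar‖ ≤ G / lam := fun ω => hWdist _ (hWjW ω)
    have hWjm : Measurable (wloc (k+1) i0 j) := hwlocmeas (k+1) i0 j
    set φ : Ω → ℝ := fun ω => ∑ x ∈ S,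
      (if X (k+1) i0 j ω = x then (1:ℝ) else 0) *
        ⟪gradient (fun u => ℓ u x) (wloc (k+1) i0 j ω), wloc (k+1) i0 j ω - wstar⟫ with hφdef
    have htermmeas : ∀ x ∈ S, Measurable (fun ω => (if X (k+1) i0 j ω = x then (1:ℝ) else 0) *
        ⟪gradient (fun u => ℓ u x) (wloc (k+1) i0 j ω), wloc (k+1) i0 j ω - wstar⟫) := by
      intro x hx
      refine Measurable.mul ?_ ?_
      · exact Measurable.ite (hXmeas (k+1) i0 j (measurableSet_singleton x))
          measurable_const measurable_const
      · exact Measurable.inner (((hgradl_cont x hx).measurable).comp hWjm)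
          (hWjm.sub measurable_const)
    have htermbd : ∀ x ∈ S, ∀ ω, |(if X (k+1) i0 j ω = x then (1:ℝ) else 0) *
        ⟪gradient (fun u => ℓ u x) (wloc (k+1) i0 j ω), wloc (k+1) i0 j ω - wstar⟫|
          ≤ G * (G / lam) := by
      intro x hx ω
      rcases ite_eq_or_eq (X (k+1) i0 j ω = x) (1:ℝ) 0 with h | h <;> rw [h]
      · rw [one_mul]
        refine le_trans (abs_real_inner_le_norm _ _) ?_
        exact mul_le_mul (hG _ (hWjW ω) _ hx) (hWjd ω) (norm_nonneg _) hGnn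
      · rw [zero_mul, abs_zero]; positivity
    have hφm : Measurable φ := Finset.measurable_sum _ fun x hx => htermmeas x hx
    have hφbd : ∀ ω, |φ ω| ≤ (S.card : ℝ) * (G * (G / lam)) := by
      intro ω
      refine le_trans (Finset.abs_sum_le_sum_abs _ _) ?_
      calc ∑ x ∈ S, |(if X (k+1) i0 j ω = x then (1:ℝ) else 0) *
            ⟪gradient (fun u => ℓ u x) (wloc (k+1) i0 j ω), wloc (k+1) i0 j ω - wstar⟫|
          ≤ ∑ _x ∈ S, G * (G / lam) := Finset.sum_le_sum fun x hx => htermbd x hx ω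
        _ = (S.card : ℝ) * (G * (G / lam)) := by rw [Finset.sum_const, nsmul_eq_mul]
    have hφeq : ∀ ω, X (k+1) i0 j ω ∈ S → φ ω =
        ⟪gradient (fun u => ℓ u (X (k+1) i0 j ω)) (wloc (k+1) i0 j ω),
          wloc (k+1) i0 j ω - wstar⟫ := by
      intro ω hXω
      simp only [hφdef]
      rw [Finset.sum_eq_single (X (k+1) i0 j ω)]
      · simp
      · intro x hx hne
        rw [if_neg (fun h => hne h.symm), zero_mul]
      · intro hnot; exact absurd hXω hnot
    -- measurable/integrable facts
    have hAm : Measurable fun ω => ‖wloc (k+1) i0 (j+1) ω - wstar‖ ^ 2 :=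
      (((hwlocmeas (k+1) i0 (j+1)).sub measurable_const).norm).pow_const 2
    have hBm : Measurable fun ω => ‖wloc (k+1) i0 j ω - wstar‖ ^ 2 :=
      ((hWjm.sub measurable_const).norm).pow_const 2
    have hintA : Integrable (fun ω => ‖wloc (k+1) i0 (j+1) ω - wstar‖ ^ 2) μ := by
      refine hIb _ hAm ((G/lam)^2) fun ω => ?_
      rw [abs_of_nonneg (by positivity)]
      exact pow_le_pow_left₀ (norm_nonneg _)
        (hWdist _ (hlocW k i0 (j+1) (by omega) (by omega) ω)) 2
    have hintB : Integrable (fun ω => ‖wloc (k+1) i0 j ω - wstar‖ ^ 2) μ := by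
      refine hIb _ hBm ((G/lam)^2) fun ω => ?_
      rw [abs_of_nonneg (by positivity)]
      exact pow_le_pow_left₀ (norm_nonneg _) (hWjd ω) 2
    have hintφ : Integrable φ μ := hIb _ hφm _ hφbd
    -- pointwise a.e. inequality
    have hptwise : ∀ᵐ ω ∂μ, ‖wloc (k+1) i0 (j+1) ω - wstar‖ ^ 2
        ≤ ‖wloc (k+1) i0 j ω - wstar‖ ^ 2 - 2*η*φ ω + η^2*G^2 := by
      filter_upwards [hXS (k+1, i0, j)] with ω hXω
      rw [hφeq ω hXω]
      set gω := gradient (fun u => ℓ u (X (k+1) i0 j ω)) (wloc (k+1) i0 j ω) with hgw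
      have h1 : wloc (k+1) i0 (j+1) ω = projW (wloc (k+1) i0 j ω - η • gω) :=
        hupdate k i0 j hj1 hjn ω
      have h2 : ‖wloc (k+1) i0 (j+1) ω - wstar‖ ≤ ‖(wloc (k+1) i0 j ω - wstar) - η • gω‖ := by
        rw [h1, show wloc (k+1) i0 j ω - wstar - η • gω
          = (wloc (k+1) i0 j ω - η • gω) - wstar by abel]
        exact projK_dist_le hWconv hprojW _ hwstarW
      have h3 : ‖(wloc (k+1) i0 j ω - wstar) - η • gω‖^2
          = ‖wloc (k+1) i0 j ω - wstar‖^2 - 2*η*⟪gω, wloc (k+1) i0 j ω - wstar⟫ + η^2*‖gω‖^2 := by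
        have e1 : ⟪wloc (k+1) i0 j ω - wstar, η • gω⟫ = η * ⟪gω, wloc (k+1) i0 j ω - wstar⟫ := by
          rw [real_inner_smul_right, real_inner_comm]
        rw [norm_sub_sq_real, e1, norm_smul, Real.norm_eq_abs, abs_of_pos hηpos, mul_pow]
        ring
      have h4 : ‖gω‖^2 ≤ G^2 := pow_le_pow_left₀ (norm_nonneg _) (hG _ (hWjW ω) _ hXω) 2
      have h5 : ‖wloc (k+1) i0 (j+1) ω - wstar‖^2 ≤ ‖(wloc (k+1) i0 j ω - wstar) - η • gω‖^2 :=
        pow_le_pow_left₀ (norm_nonneg _) h2 2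
      rw [h3] at h5
      nlinarith [sq_nonneg η]
    -- lower bound on ∫ φ
    have hφint : lam * ∫ ω, ‖wloc (k+1) i0 j ω - wstar‖^2 ∂μ ≤ ∫ ω, φ ω ∂μ := by
      obtain ⟨ftil, hftm, hfte⟩ := hloc k (hwrep k) i0 j hj1 (by omega)
      have hqnot : ((k+1, i0, j) : ℕ × Fin m × ℕ) ∉ T k j := by
        intro hq
        simp only [hT, Set.mem_setOf_eq] at hq
        omega
      have hind := hindep k j (k+1, i0, j) hqnot ftil hftm
      have hterm : ∀ x ∈ S, ∫ ω, (if X (k+1) i0 j ω = x then (1:ℝ) else 0) *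
          ⟪gradient (fun u => ℓ u x) (wloc (k+1) i0 j ω), wloc (k+1) i0 j ω - wstar⟫ ∂μ
          = (S.card : ℝ)⁻¹ *
              ∫ ω, ⟪gradient (fun u => ℓ u x) (wloc (k+1) i0 j ω),
                wloc (k+1) i0 j ω - wstar⟫ ∂μ := by
        intro x hx
        set χ : EuclideanSpace ℝ (Fin d) → ℝ := fun y => if y = x then 1 else 0 with hχdef
        set fx : EuclideanSpace ℝ (Fin d) → ℝ :=
          fun v => ⟪gradient (fun u => ℓ u x) v, v - wstar⟫ with hfxdef
        have hχm : Measurable χ := by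
          refine Measurable.ite ?_ measurable_const measurable_const
          simpa using (measurableSet_singleton x)
        have hfxc : Continuous fx :=
          Continuous.inner (hgradl_cont x hx) (continuous_id.sub continuous_const)
        have hIF : IndepFun (χ ∘ (X (k+1) i0 j)) (fx ∘ ftil) μ :=
          hind.comp hχm hfxc.measurable
        have e1 : ∫ ω, (if X (k+1) i0 j ω = x then (1:ℝ) else 0) * fx (wloc (k+1) i0 j ω) ∂μ
            = ∫ ω, (χ ∘ (X (k+1) i0 j)) ω * (fx ∘ ftil) ω ∂μ := by
          refine integral_congr_ae ?_
          filter_upwards [hfte] with ω hω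
          simp only [Function.comp_apply, hχdef]
          rw [hω]
        have e2 : ∫ ω, (χ ∘ X (k+1) i0 j) ω * (fx ∘ ftil) ω ∂μ
            = (∫ ω, (χ ∘ X (k+1) i0 j) ω ∂μ) * ∫ ω, (fx ∘ ftil) ω ∂μ :=
          hIF.integral_fun_mul_eq_mul_integral (hχm.comp (hXmeas (k+1) i0 j)).aestronglyMeasurable
            ((hfxc.measurable.comp (hftm.mono (hFle k j) le_rfl))).aestronglyMeasurable
        have e3 : ∫ ω, (χ ∘ X (k+1) i0 j) ω ∂μ = (S.card : ℝ)⁻¹ := by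
          have h := integral_map (μ := μ) (hXmeas (k+1) i0 j).aemeasurable
            (f := χ) hχm.aestronglyMeasurable
          rw [hXunif (k+1) i0 j] at h
          rw [show (fun ω => (χ ∘ X (k+1) i0 j) ω) = fun ω => χ (X (k+1) i0 j ω) from rfl, ← h]
          rw [integral_smul_measure]
          rw [integral_finset_sum_measure (fun s hs => ?_)]
          · have : ∀ s ∈ S, ∫ y, χ y ∂(Measure.dirac s) = χ s :=
              fun s hs => integral_dirac _ _
            rw [Finset.sum_congr rfl this]
            have : ∑ s ∈ S, χ s = 1 := by
              rw [hχdef]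
              rw [Finset.sum_ite_eq' S x (fun _ => (1:ℝ))]
              simp [hx]
            rw [this]
            simp [ENNReal.toReal_inv]
          · exact (integrable_const 1).mono' hχm.aestronglyMeasurable
              (Filter.Eventually.of_forall fun y => by
                rw [hχdef]; simp only [Real.norm_eq_abs]
                split <;> simp)
        have e4 : ∫ ω, (fx ∘ ftil) ω ∂μ = ∫ ω, fx (wloc (k+1) i0 j ω) ∂μ := by
          refine integral_congr_ae ?_
          filter_upwards [hfte] with ω hω
          simp only [Function.comp_apply]
          rw [hω]
        rw [e1, e2, e3, e4]
      have hφsplit : ∫ ω, φ ω ∂μ = ∑ x ∈ S, ∫ ω, (if X (k+1) i0 j ω = x then (1:ℝ) else 0) *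
          ⟪gradient (fun u => ℓ u x) (wloc (k+1) i0 j ω), wloc (k+1) i0 j ω - wstar⟫ ∂μ :=
        integral_finset_sum S fun x hx => hIb _ (htermmeas x hx) _ (htermbd x hx)
      have hintfx : ∀ x ∈ S, Integrable (fun ω =>
          ⟪gradient (fun u => ℓ u x) (wloc (k+1) i0 j ω), wloc (k+1) i0 j ω - wstar⟫) μ := by
        intro x hx
        refine hIb _ (Measurable.inner (((hgradl_cont x hx).measurable).comp hWjm)
          (hWjm.sub measurable_const)) (G * (G/lam)) fun ω => ?_
        refine le_trans (abs_real_inner_le_norm _ _) ?_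
        exact mul_le_mul (hG _ (hWjW ω) _ hx) (hWjd ω) (norm_nonneg _) hGnn
      have h6 : ∑ x ∈ S, ∫ ω, ⟪gradient (fun u => ℓ u x) (wloc (k+1) i0 j ω),
          wloc (k+1) i0 j ω - wstar⟫ ∂μ
          = ∫ ω, ∑ x ∈ S, ⟪gradient (fun u => ℓ u x) (wloc (k+1) i0 j ω),
              wloc (k+1) i0 j ω - wstar⟫ ∂μ :=
        (integral_finset_sum S fun x hx => hintfx x hx).symm
      have h7 : ∀ ω, (S.card:ℝ)⁻¹ * ∑ x ∈ S, ⟪gradient (fun u => ℓ u x) (wloc (k+1) i0 j ω),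
          wloc (k+1) i0 j ω - wstar⟫ = ⟪gradient L (wloc (k+1) i0 j ω),
            wloc (k+1) i0 j ω - wstar⟫ := by
        intro ω
        rw [hgradL (wloc (k+1) i0 j ω), real_inner_smul_left, sum_inner]
      have h8 : lam * ∫ ω, ‖wloc (k+1) i0 j ω - wstar‖^2 ∂μ
          ≤ ∫ ω, ⟪gradient L (wloc (k+1) i0 j ω), wloc (k+1) i0 j ω - wstar⟫ ∂μ := by
        rw [← integral_const_mul]
        refine integral_mono (hintB.const_mul lam) ?_ ?_
        · refine hIb _ ((hgradL_cont.measurable.comp hWjm).inner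
            (hWjm.sub measurable_const)) (G * (G/lam)) fun ω => ?_
          refine le_trans (abs_real_inner_le_norm _ _) ?_
          exact mul_le_mul (hgradLle _ (hWjW ω)) (hWjd ω) (norm_nonneg _) hGnn
        · intro ω
          exact hmono _ (hWjW ω)
      calc lam * ∫ ω, ‖wloc (k+1) i0 j ω - wstar‖^2 ∂μ
          ≤ ∫ ω, ⟪gradient L (wloc (k+1) i0 j ω), wloc (k+1) i0 j ω - wstar⟫ ∂μ := h8
        _ = ∫ ω, (S.card:ℝ)⁻¹ * ∑ x ∈ S, ⟪gradient (fun u => ℓ u x) (wloc (k+1) i0 j ω),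
              wloc (k+1) i0 j ω - wstar⟫ ∂μ :=
            integral_congr_ae (Filter.Eventually.of_forall fun ω => (h7 ω).symm)
        _ = (S.card:ℝ)⁻¹ * ∫ ω, ∑ x ∈ S, ⟪gradient (fun u => ℓ u x) (wloc (k+1) i0 j ω),
              wloc (k+1) i0 j ω - wstar⟫ ∂μ := integral_const_mul _ _
        _ = (S.card:ℝ)⁻¹ * ∑ x ∈ S, ∫ ω, ⟪gradient (fun u => ℓ u x) (wloc (k+1) i0 j ω),
              wloc (k+1) i0 j ω - wstar⟫ ∂μ := by rw [← h6]
        _ = ∑ x ∈ S, (S.card:ℝ)⁻¹ * ∫ ω, ⟪gradient (fun u => ℓ u x) (wloc (k+1) i0 j ω),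
              wloc (k+1) i0 j ω - wstar⟫ ∂μ := Finset.mul_sum _ _ _
        _ = ∑ x ∈ S, ∫ ω, (if X (k+1) i0 j ω = x then (1:ℝ) else 0) *
              ⟪gradient (fun u => ℓ u x) (wloc (k+1) i0 j ω),
                wloc (k+1) i0 j ω - wstar⟫ ∂μ :=
            (Finset.sum_congr rfl fun x hx => hterm x hx).symm
        _ = ∫ ω, φ ω ∂μ := hφsplit.symm
    -- integrate the pointwise bound
    have hintφ' : Integrable (fun ω => 2*η*φ ω) μ := hintφ.const_mul (2*η)
    have i1 : Integrable (fun ω => ‖wloc (k+1) i0 j ω - wstar‖^2 - 2*η*φ ω) μ :=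
      hintB.sub hintφ'
    have hstep1 : ∫ ω, ‖wloc (k+1) i0 (j+1) ω - wstar‖^2 ∂μ
        ≤ ∫ ω, (‖wloc (k+1) i0 j ω - wstar‖^2 - 2*η*φ ω + η^2*G^2) ∂μ :=
      integral_mono_ae hintA (i1.add (integrable_const _)) hptwise
    have hstep2 : ∫ ω, (‖wloc (k+1) i0 j ω - wstar‖^2 - 2*η*φ ω + η^2*G^2) ∂μ
        = ∫ ω, ‖wloc (k+1) i0 j ω - wstar‖^2 ∂μ - 2*η*∫ ω, φ ω ∂μ + η^2*G^2 := by
      rw [integral_add i1 (integrable_const _), integral_sub hintB hintφ', integral_const]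
      simp only [probReal_univ, one_smul]
      rw [integral_const_mul]
    have hc1 : ∫ ω, ‖wloc (k+1) i0 (j+1) ω - wstar‖^2 ∂μ
        ≤ ∫ ω, ‖wloc (k+1) i0 j ω - wstar‖^2 ∂μ
          - 2*η*(lam * ∫ ω, ‖wloc (k+1) i0 j ω - wstar‖^2 ∂μ) + η^2*G^2 := by
      have h9 := hstep1.trans_eq hstep2
      have h10 : 2*η*(lam * ∫ ω, ‖wloc (k+1) i0 j ω - wstar‖^2 ∂μ) ≤ 2*η*∫ ω, φ ω ∂μ :=
        mul_le_mul_of_nonneg_left hφint (by positivity)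
      linarith
    have efin0 : 2*η*lam = 4/t := by
      rw [hηdef]; field_simp [hlam.ne', ht0.ne']; ring
    have efin1 : (1:ℝ) - 4/t = 1 - 2*η*lam := by rw [efin0]
    have efin2 : (4*G^2/lam^2)/t^2 = η^2*G^2 := by
      rw [hηdef]
      field_simp [hlam.ne', ht0.ne']
      ring
    rw [efin1, efin2]
    calc ∫ ω, ‖wloc (k+1) i0 (j+1) ω - wstar‖^2 ∂μ
        ≤ ∫ ω, ‖wloc (k+1) i0 j ω - wstar‖^2 ∂μ
          - 2*η*(lam * ∫ ω, ‖wloc (k+1) i0 j ω - wstar‖^2 ∂μ) + η^2*G^2 := hc1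
      _ = (1 - 2*η*lam) * ∫ ω, ‖wloc (k+1) i0 j ω - wstar‖^2 ∂μ + η^2*G^2 := by ring
  -- ============ Part E : induction over j and conclusion ============
  have hnR : (0:ℝ) < (n:ℝ) := by exact_mod_cast hn
  have hcnn : ∀ j' : ℕ, 0 ≤ ∫ ω, ‖wloc (k+1) ⟨0, hm⟩ j' ω - wstar‖^2 ∂μ :=
    fun j' => integral_nonneg fun ω => by positivity
  have hc1a : ∫ ω, ‖wloc (k+1) ⟨0, hm⟩ 1 ω - wstar‖^2 ∂μ = ∫ ω, ‖w k ω - wstar‖^2 ∂μ := by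
    refine integral_congr_ae (Filter.Eventually.of_forall fun ω => ?_)
    simp only [hinit]
  have hmain : ∀ j : ℕ, 1 ≤ j → j ≤ n + 1 →
      ((k:ℝ)*(n:ℝ) + (j:ℝ) - 1)^2 * ∫ ω, ‖wloc (k+1) ⟨0, hm⟩ j ω - wstar‖^2 ∂μ
        ≤ ((k:ℝ)*(n:ℝ))^2 * ∫ ω, ‖w k ω - wstar‖^2 ∂μ + (4*G^2/lam^2) * ((j:ℝ) - 1) := by
    intro j
    induction j with
    | zero => intro h; omega
    | succ jj ih =>
      intro _ hj2
      rcases Nat.eq_zero_or_pos jj with h0 | h0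
      · subst h0
        simp only [Nat.zero_add]
        rw [hc1a]
        push_cast
        have e : ((k:ℝ)*(n:ℝ) + 1 - 1)^2 = ((k:ℝ)*(n:ℝ))^2 := by ring
        rw [e]
        linarith [integral_nonneg (μ := μ) (f := fun ω => ‖w k ω - wstar‖^2)
          (fun ω => by positivity : ∀ ω, 0 ≤ ‖w k ω - wstar‖^2)]
      · have hjj := ih h0 (by omega)
        have hk2 := hkey jj h0 (by omega)
        set Cj := ∫ ω, ‖wloc (k+1) ⟨0, hm⟩ jj ω - wstar‖^2 ∂μ with hCjdef
        set Cj1 := ∫ ω, ‖wloc (k+1) ⟨0, hm⟩ (jj+1) ω - wstar‖^2 ∂μ with hCj1def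
        set t : ℝ := (k:ℝ)*(n:ℝ) + (jj:ℝ) with htdef
        have ht1 : 1 ≤ t := by
          have h1 : (1:ℝ) ≤ (jj:ℝ) := by exact_mod_cast h0
          have h2 : (0:ℝ) ≤ (k:ℝ)*(n:ℝ) := by positivity
          rw [htdef]; linarith
        have ht0 : 0 < t := lt_of_lt_of_le one_pos ht1
        have h1 : t^2 * Cj1 ≤ (t^2 - 4*t) * Cj + 4*G^2/lam^2 := by
          have hmul := mul_le_mul_of_nonneg_left hk2 (sq_nonneg t)
          have e1 : t^2 * ((1 - 4/t)*Cj + (4*G^2/lam^2)/t^2)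
              = (t^2 - 4*t)*Cj + 4*G^2/lam^2 := by
            field_simp
          rw [e1] at hmul
          exact hmul
        have h2 : (t^2 - 4*t) * Cj ≤ (t-1)^2 * Cj :=
          mul_le_mul_of_nonneg_right (by nlinarith) (hcnn jj)
        have h3 : (t-1)^2 * Cj ≤ ((k:ℝ)*(n:ℝ))^2 * ∫ ω, ‖w k ω - wstar‖^2 ∂μ
            + (4*G^2/lam^2) * ((jj:ℝ) - 1) := by
          have e2 : ((t:ℝ) - 1)^2 = ((k:ℝ)*(n:ℝ) + (jj:ℝ) - 1)^2 := by rw [htdef]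
          rw [e2]
          exact hjj
        push_cast
        rw [htdef] at h1 h2 h3
        nlinarith [h1, h2, h3]
  have hfin := hmain (n+1) (by omega) le_rfl
  push_cast at hfin
  have hNpos : (0:ℝ) < ((k:ℝ)+1)*(n:ℝ) := mul_pos (by positivity) hnR
  have hgoal_eq : ((k:ℝ)^2/((k:ℝ)+1)^2) * ∫ ω, ‖w k ω - wstar‖^2 ∂μ
      + (4*G^2/lam^2)/(((k:ℝ)+1)^2*(n:ℝ))
      = (((k:ℝ)*(n:ℝ))^2 * ∫ ω, ‖w k ω - wstar‖^2 ∂μ + (4*G^2/lam^2)*(n:ℝ))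
          / ((((k:ℝ)+1)*(n:ℝ))^2) := by
    have hk1 : ((k:ℝ)+1) ≠ 0 := by positivity
    field_simp
  rw [show (4 * G ^ 2 / lam ^ 2) / (((k:ℝ) + 1) ^ 2 * (n:ℝ))
    = (4*G^2/lam^2)/(((k:ℝ)+1)^2*(n:ℝ)) from rfl]
  rw [hgoal_eq, le_div_iff₀ (pow_pos hNpos 2)]
  nlinarith [hfin]
end

section
/- Let w be a W-valued random vector measurable with respect to a sub-σ-algebra F, let x be uniformly distributed on the finite set S and independent of F, and set w' := Π_W(w − η∇ℓ(w;x)) for a stepsize η > 0. If ‖∇ℓ(v;x)‖ ≤ G for all (v,x) ∈ W×S, w* ∈ W, and ⟨∇L(v), v − w*⟩ ≥ μ‖v − w*‖² for all v ∈ W (with μ > 0), then E[‖w' − w*‖²] ≤ (1 − 2ημ)·E[‖w − w*‖²] + η²G². -/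
open MeasureTheory ProbabilityTheory
open scoped RealInnerProductSpace

set_option maxHeartbeats 1000000 in
lemma proj_nonexp_aux {F : Type*} [NormedAddCommGroup F] [InnerProductSpace ℝ F] [CompleteSpace F]
    {W : Set F} (hWconv : Convex ℝ W) {p v u : F} (hp : p ∈ W)
    (hmin : ∀ u ∈ W, ‖v - p‖ ≤ ‖v - u‖) (hu : u ∈ W) :
    ‖p - u‖ ≤ ‖v - u‖ := by
  have hne : Nonempty W := ⟨⟨p, hp⟩⟩
  have heq : ‖v - p‖ = ⨅ q : W, ‖v - q‖ := by
    apply le_antisymm (le_ciInf fun q : W => hmin q.1 q.2)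
    apply ciInf_le _ (⟨p, hp⟩ : W)
    refine ⟨0, ?_⟩
    rintro r ⟨q, rfl⟩
    exact norm_nonneg _
  have hinner : ⟪v - p, u - p⟫ ≤ 0 :=
    (norm_eq_iInf_iff_real_inner_le_zero hWconv hp).mp heq u hu
  have hexp : ‖v - u‖ ^ 2 = ‖v - p‖ ^ 2 + 2 * ⟪v - p, p - u⟫ + ‖p - u‖ ^ 2 := by
    have h : v - u = (v - p) + (p - u) := by abel
    rw [h, norm_add_sq_real]
  have h2 : 0 ≤ ⟪v - p, p - u⟫ := by
    have h3 : ⟪v - p, p - u⟫ = - ⟪v - p, u - p⟫ := by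
      rw [← inner_neg_right]; congr 1; abel
    rw [h3]; linarith
  have hle : ‖p - u‖ ^ 2 ≤ ‖v - u‖ ^ 2 := by nlinarith [sq_nonneg ‖v - p‖]
  calc ‖p - u‖ = Real.sqrt (‖p - u‖ ^ 2) := by rw [Real.sqrt_sq (norm_nonneg _)]
    _ ≤ Real.sqrt (‖v - u‖ ^ 2) := Real.sqrt_le_sqrt hle
    _ = ‖v - u‖ := Real.sqrt_sq (norm_nonneg _)

set_option maxHeartbeats 2000000 in
/-- One-step SGD contraction. If `w` is `W`-valued and `F`-measurable, `x` is
uniform on the finite set `S` and independent of `F`, `w' := Π_W(w − η∇ℓ(w;x))`,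
`‖∇ℓ(v;x)‖ ≤ G` on `W×S`, `w* ∈ W`, and `⟨∇L(v), v − w*⟩ ≥ μ₀‖v − w*‖²` for all `v ∈ W` with
`μ₀ > 0`, then `E[‖w' − w*‖²] ≤ (1 − 2ημ₀)·E[‖w − w*‖²] + η²G²`. -/
theorem stmt_6 {d : ℕ}
    (S : Finset (EuclideanSpace ℝ (Fin d))) (hS : S.Nonempty)
    (ℓ : EuclideanSpace ℝ (Fin d) → EuclideanSpace ℝ (Fin d) → ℝ)
    (hdiff : ∀ x ∈ S, Differentiable ℝ (fun w => ℓ w x))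
    (L : EuclideanSpace ℝ (Fin d) → ℝ)
    (hLdef : L = fun w => (S.card : ℝ)⁻¹ * ∑ x ∈ S, ℓ w x)
    (W : Set (EuclideanSpace ℝ (Fin d)))
    (hWconv : Convex ℝ W) (hWcomp : IsCompact W) (hWne : W.Nonempty)
    (projW : EuclideanSpace ℝ (Fin d) → EuclideanSpace ℝ (Fin d))
    (hprojW : ∀ v, projW v ∈ W ∧ ∀ u ∈ W, ‖v - projW v‖ ≤ ‖v - u‖)
    (wstar : EuclideanSpace ℝ (Fin d)) (hwstarW : wstar ∈ W)
    (G : ℝ) (hG : ∀ v ∈ W, ∀ x ∈ S, ‖gradient (fun u => ℓ u x) v‖ ≤ G)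
    (μ₀ : ℝ) (hμ₀ : 0 < μ₀)
    (hmono : ∀ v ∈ W, μ₀ * ‖v - wstar‖ ^ 2 ≤ ⟪gradient L v, v - wstar⟫)
    {Ω : Type} {m0 : MeasurableSpace Ω} (P : Measure Ω) [IsProbabilityMeasure P]
    (F : MeasurableSpace Ω) (hF : F ≤ m0)
    (w : Ω → EuclideanSpace ℝ (Fin d)) (hwF : Measurable[F] w) (hwW : ∀ ω, w ω ∈ W)
    (x : Ω → EuclideanSpace ℝ (Fin d)) (hxmeas : Measurable[m0] x)
    (hxunif : @MeasureTheory.Measure.map Ω _ m0 _ x P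
      = (S.card : ENNReal)⁻¹ • ∑ s ∈ S, (Measure.dirac s : Measure (EuclideanSpace ℝ (Fin d))))
    (hindep : Indep (MeasurableSpace.comap x inferInstance) F P)
    (η : ℝ) (hη : 0 < η)
    (w' : Ω → EuclideanSpace ℝ (Fin d))
    (hw' : ∀ ω, w' ω = projW (w ω - η • gradient (fun u => ℓ u (x ω)) (w ω))) :
    ∫ ω, ‖w' ω - wstar‖ ^ 2 ∂P
      ≤ (1 - 2 * η * μ₀) * ∫ ω, ‖w ω - wstar‖ ^ 2 ∂P + η ^ 2 * G ^ 2 := by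
  classical
  letI : MeasurableSpace Ω := m0
  obtain ⟨s0, hs0⟩ := hS
  have hwm : Measurable[m0] w := hwF.mono hF le_rfl
  have hproj : ∀ v, ∀ u ∈ W, ‖projW v - u‖ ≤ ‖v - u‖ :=
    fun v u hu => proj_nonexp_aux hWconv (hprojW v).1 (hprojW v).2 hu
  -- gradient abbreviation
  set gs : EuclideanSpace ℝ (Fin d) → EuclideanSpace ℝ (Fin d) → EuclideanSpace ℝ (Fin d) :=
    fun s v => gradient (fun u => ℓ u s) v with hgs_def
  have hgsmeas : ∀ s, Measurable (gs s) := fun s =>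
    ((InnerProductSpace.toDual ℝ (EuclideanSpace ℝ (Fin d))).symm.continuous.measurable).comp
      (measurable_fderiv ℝ (fun u => ℓ u s))
  -- diameter bound
  obtain ⟨D, hD⟩ := hWcomp.exists_bound_of_continuousOn
    ((continuous_id.sub continuous_const).continuousOn
      : ContinuousOn (fun v => v - wstar) W)
  have hG0 : 0 ≤ G := le_trans (norm_nonneg _) (hG wstar hwstarW s0 hs0)
  have hD0 : 0 ≤ D := le_trans (norm_nonneg _) (hD wstar hwstarW)
  -- indicator functions
  set inds : EuclideanSpace ℝ (Fin d) → EuclideanSpace ℝ (Fin d) → ℝ :=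
    fun s y => if y = s then 1 else 0 with hinds_def
  have hindsmeas : ∀ s, Measurable (inds s) := by
    intro s
    exact Measurable.ite (measurableSet_eq) measurable_const measurable_const
  have hinds01 : ∀ s y, 0 ≤ inds s y ∧ inds s y ≤ 1 := by
    intro s y
    by_cases h : y = s <;> simp [hinds_def, h]
  -- the inner product functions
  set φ : EuclideanSpace ℝ (Fin d) → EuclideanSpace ℝ (Fin d) → ℝ :=
    fun s v => ⟪gs s v, v - wstar⟫ with hφ_def
  have hφmeas : ∀ s, Measurable (φ s) := fun s =>
    (hgsmeas s).inner (measurable_id.sub measurable_const)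
  have hφbdd : ∀ s ∈ S, ∀ v ∈ W, |φ s v| ≤ G * D := by
    intro s hs v hv
    calc |φ s v| ≤ ‖gs s v‖ * ‖v - wstar‖ := abs_real_inner_le_norm _ _
      _ ≤ G * D := mul_le_mul (hG v hv s hs) (hD v hv) (norm_nonneg _) hG0
  -- the measurable version of the stochastic gradient
  set gt : Ω → EuclideanSpace ℝ (Fin d) :=
    fun ω => ∑ s ∈ S, inds s (x ω) • gs s (w ω) with hgt_def
  have hgtmeas : Measurable[m0] gt :=
    Finset.measurable_sum _ fun s _ =>
      (((hindsmeas s).comp hxmeas).smul ((hgsmeas s).comp hwm))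
  have hgt_eq : ∀ ω, x ω ∈ S → gt ω = gradient (fun u => ℓ u (x ω)) (w ω) := by
    intro ω hω
    have h1 : ∀ s ∈ S, inds s (x ω) • gs s (w ω)
        = if x ω = s then gs s (w ω) else 0 := by
      intro s _
      by_cases h : x ω = s <;> simp [hinds_def, h]
    rw [hgt_def]
    simp only []
    rw [Finset.sum_congr rfl h1, Finset.sum_ite_eq S (x ω) (fun s => gs s (w ω))]
    simp [hω, hgs_def]
  have hgt_norm : ∀ ω, ‖gt ω‖ ≤ G := by
    intro ω
    by_cases hω : x ω ∈ S
    · rw [hgt_eq ω hω]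
      exact hG _ (hwW ω) _ hω
    · have h0 : gt ω = 0 := Finset.sum_eq_zero fun s hs => by
        have hne : x ω ≠ s := fun h => hω (h ▸ hs)
        simp [hinds_def, hne]
      rw [h0]
      simpa using hG0
  -- x is a.e. in S, and distribution values
  have hSm : MeasurableSet (↑S : Set (EuclideanSpace ℝ (Fin d))) :=
    S.finite_toSet.measurableSet
  have hxS : ∀ᵐ ω ∂P, x ω ∈ S := by
    have h0 : P (x ⁻¹' (↑S)ᶜ) = 0 := by
      have h1 : P (x ⁻¹' (↑S)ᶜ) = (Measure.map x P) (↑S)ᶜ :=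
        (Measure.map_apply hxmeas hSm.compl).symm
      rw [h1, hxunif, Measure.smul_apply, Measure.coe_finset_sum, Finset.sum_apply]
      have h2 : ∀ t ∈ S, (Measure.dirac t : Measure (EuclideanSpace ℝ (Fin d))) (↑S)ᶜ = 0 := by
        intro t ht
        rw [Measure.dirac_apply' t hSm.compl]
        simp [ht]
      rw [Finset.sum_congr rfl h2]
      simp
    rw [ae_iff]
    have h2 : {ω | ¬ x ω ∈ S} = x ⁻¹' (↑S)ᶜ := by ext ω; simp
    rw [h2, h0]
  have hxval : ∀ s ∈ S, P (x ⁻¹' {s}) = (S.card : ENNReal)⁻¹ := by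
    intro s hs
    have h1 : P (x ⁻¹' {s}) = (Measure.map x P) {s} :=
      (Measure.map_apply hxmeas (measurableSet_singleton s)).symm
    rw [h1, hxunif, Measure.smul_apply, Measure.coe_finset_sum, Finset.sum_apply]
    have h2 : ∀ t ∈ S, (Measure.dirac t : Measure (EuclideanSpace ℝ (Fin d))) {s}
        = if t = s then 1 else 0 := by
      intro t _
      rw [Measure.dirac_apply' t (measurableSet_singleton s)]
      by_cases h : t = s <;> simp [h]
    rw [Finset.sum_congr rfl h2, Finset.sum_ite_eq' S s (fun _ => (1:ENNReal))]
    simp [hs]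
  -- integral of the indicators
  have hindint : ∀ s ∈ S, ∫ ω, inds s (x ω) ∂P = (S.card : ℝ)⁻¹ := by
    intro s hs
    have hre : (fun ω => inds s (x ω))
        = Set.indicator (x ⁻¹' {s}) (fun _ => (1:ℝ)) := by
      funext ω
      simp [hinds_def, Set.indicator_apply]
    rw [hre, integral_indicator_const _ (hxmeas (measurableSet_singleton s)), measureReal_def, hxval s hs]
    simp [ENNReal.toReal_inv]
  -- independence
  have hindepf : ∀ s ∈ S, IndepFun (fun ω => inds s (x ω)) (fun ω => φ s (w ω)) P := by
    intro s hs
    have h1 : MeasurableSpace.comap (fun ω => inds s (x ω)) inferInstance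
        ≤ MeasurableSpace.comap x inferInstance :=
      le_trans (le_of_eq (MeasurableSpace.comap_comp (f := inds s) (g := x)).symm)
        (MeasurableSpace.comap_mono (hindsmeas s).comap_le)
    have h2 : MeasurableSpace.comap (fun ω => φ s (w ω)) inferInstance ≤ F :=
      le_trans
        (le_trans (le_of_eq (MeasurableSpace.comap_comp (f := φ s) (g := w)).symm)
          (MeasurableSpace.comap_mono (hφmeas s).comap_le))
        hwF.comap_le
    exact indep_of_indep_of_le_left (indep_of_indep_of_le_right hindep h2) h1
  -- integrability
  have hwdmeas : Measurable[m0] (fun ω => ‖w ω - wstar‖ ^ 2) :=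
    ((hwm.sub measurable_const).norm.pow_const 2)
  have hint1 : Integrable (fun ω => ‖w ω - wstar‖ ^ 2) P := by
    refine Integrable.mono' (integrable_const (D ^ 2)) hwdmeas.aestronglyMeasurable
      (ae_of_all _ fun ω => ?_)
    rw [Real.norm_eq_abs, abs_of_nonneg (by positivity)]
    exact pow_le_pow_left₀ (norm_nonneg _) (hD _ (hwW ω)) 2
  have hint2 : Integrable (fun ω => ‖gt ω‖ ^ 2) P := by
    refine Integrable.mono' (integrable_const (G ^ 2))
      ((hgtmeas.norm.pow_const 2)).aestronglyMeasurable (ae_of_all _ fun ω => ?_)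
    rw [Real.norm_eq_abs, abs_of_nonneg (by positivity)]
    exact pow_le_pow_left₀ (norm_nonneg _) (hgt_norm ω) 2
  have hfinnermeas : Measurable[m0] (fun ω => ⟪gt ω, w ω - wstar⟫) :=
    hgtmeas.inner (hwm.sub measurable_const)
  have hint3 : Integrable (fun ω => ⟪gt ω, w ω - wstar⟫) P := by
    refine Integrable.mono' (integrable_const (G * D)) hfinnermeas.aestronglyMeasurable
      (ae_of_all _ fun ω => ?_)
    rw [Real.norm_eq_abs]
    calc |⟪gt ω, w ω - wstar⟫| ≤ ‖gt ω‖ * ‖w ω - wstar‖ := abs_real_inner_le_norm _ _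
      _ ≤ G * D := mul_le_mul (hgt_norm ω) (hD _ (hwW ω)) (norm_nonneg _) hG0
  have hint5 : ∀ s ∈ S, Integrable (fun ω => φ s (w ω)) P := by
    intro s hs
    refine Integrable.mono' (integrable_const (G * D))
      ((hφmeas s).comp hwm).aestronglyMeasurable (ae_of_all _ fun ω => ?_)
    rw [Real.norm_eq_abs]
    exact hφbdd s hs _ (hwW ω)
  have hint4 : ∀ s ∈ S, Integrable (fun ω => inds s (x ω) * φ s (w ω)) P := by
    intro s hs
    refine Integrable.mono' (integrable_const (G * D))
      (((hindsmeas s).comp hxmeas).mul ((hφmeas s).comp hwm)).aestronglyMeasurable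
      (ae_of_all _ fun ω => ?_)
    rw [Real.norm_eq_abs, abs_mul]
    calc |inds s (x ω)| * |φ s (w ω)| ≤ 1 * (G * D) := by
          refine mul_le_mul ?_ (hφbdd s hs _ (hwW ω)) (abs_nonneg _) zero_le_one
          rw [abs_of_nonneg (hinds01 s (x ω)).1]
          exact (hinds01 s (x ω)).2
      _ = G * D := one_mul _
  -- pointwise expansion of the inner product
  have hfinner_eq : ∀ ω, ⟪gt ω, w ω - wstar⟫ = ∑ s ∈ S, inds s (x ω) * φ s (w ω) := by
    intro ω
    rw [hgt_def]
    simp only []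
    rw [sum_inner]
    exact Finset.sum_congr rfl fun s _ => real_inner_smul_left _ _ _
  -- gradient of L
  have hgradL : ∀ v, gradient L v = (S.card : ℝ)⁻¹ • ∑ s ∈ S, gs s v := by
    intro v
    have hds : ∀ s ∈ S, DifferentiableAt ℝ (fun u => ℓ u s) v := fun s hs => (hdiff s hs) v
    have hsum : DifferentiableAt ℝ (fun u => ∑ s ∈ S, ℓ u s) v := DifferentiableAt.fun_sum hds
    have h1 : fderiv ℝ L v = (S.card : ℝ)⁻¹ • ∑ s ∈ S, fderiv ℝ (fun u => ℓ u s) v := by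
      rw [hLdef, fderiv_const_mul hsum, fderiv_fun_sum hds]
    show (InnerProductSpace.toDual ℝ _).symm (fderiv ℝ L v) = _
    rw [h1, _root_.map_smul, map_sum]
    rfl
  have hgradinner : ∀ v, ⟪gradient L v, v - wstar⟫ = (S.card : ℝ)⁻¹ * ∑ s ∈ S, φ s v := by
    intro v
    rw [hgradL v, real_inner_smul_left, sum_inner]
  -- pointwise contraction inequality
  have hptwise : ∀ᵐ ω ∂P, ‖w' ω - wstar‖ ^ 2
      ≤ ‖w ω - wstar‖ ^ 2 - 2 * η * ⟪gt ω, w ω - wstar⟫ + η ^ 2 * ‖gt ω‖ ^ 2 := by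
    filter_upwards [hxS] with ω hω
    have hw'ω : w' ω = projW (w ω - η • gt ω) := by rw [hw' ω, hgt_eq ω hω]
    have h1 : ‖projW (w ω - η • gt ω) - wstar‖ ≤ ‖(w ω - η • gt ω) - wstar‖ :=
      hproj _ _ hwstarW
    have h2 : ‖w' ω - wstar‖ ^ 2 ≤ ‖(w ω - η • gt ω) - wstar‖ ^ 2 := by
      rw [hw'ω]
      exact pow_le_pow_left₀ (norm_nonneg _) h1 2
    have h3 : w ω - η • gt ω - wstar = (w ω - wstar) - η • gt ω := by abel
    have h4 : ‖(w ω - wstar) - η • gt ω‖ ^ 2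
        = ‖w ω - wstar‖ ^ 2 - 2 * η * ⟪gt ω, w ω - wstar⟫ + η ^ 2 * ‖gt ω‖ ^ 2 := by
      rw [norm_sub_sq_real, real_inner_smul_right, norm_smul, Real.norm_eq_abs, mul_pow,
        sq_abs, real_inner_comm]
      ring
    rw [h3, h4] at h2
    exact h2
  -- integral comparison
  have hintA : Integrable
      (fun ω => ‖w ω - wstar‖ ^ 2 - 2 * η * ⟪gt ω, w ω - wstar⟫ + η ^ 2 * ‖gt ω‖ ^ 2) P :=
    (hint1.sub (hint3.const_mul (2 * η))).add (hint2.const_mul (η ^ 2))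
  have key2 : ∫ ω, ‖w' ω - wstar‖ ^ 2 ∂P
      ≤ ∫ ω, (‖w ω - wstar‖ ^ 2 - 2 * η * ⟪gt ω, w ω - wstar⟫ + η ^ 2 * ‖gt ω‖ ^ 2) ∂P :=
    integral_mono_of_nonneg (ae_of_all _ fun ω => by positivity) hintA hptwise
  have key3 : ∫ ω, (‖w ω - wstar‖ ^ 2 - 2 * η * ⟪gt ω, w ω - wstar⟫ + η ^ 2 * ‖gt ω‖ ^ 2) ∂P
      = (∫ ω, ‖w ω - wstar‖ ^ 2 ∂P) - 2 * η * (∫ ω, ⟪gt ω, w ω - wstar⟫ ∂P)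
        + η ^ 2 * (∫ ω, ‖gt ω‖ ^ 2 ∂P) := by
    have hintc3 : Integrable (fun ω => 2 * η * ⟪gt ω, w ω - wstar⟫) P :=
      hint3.const_mul (2 * η)
    have hintsub : Integrable (fun ω => ‖w ω - wstar‖ ^ 2 - 2 * η * ⟪gt ω, w ω - wstar⟫) P :=
      hint1.sub hintc3
    have hintc2 : Integrable (fun ω => η ^ 2 * ‖gt ω‖ ^ 2) P := hint2.const_mul (η ^ 2)
    rw [integral_add hintsub hintc2,
      integral_sub hint1 hintc3,
      integral_const_mul (2 * η) (fun ω => ⟪gt ω, w ω - wstar⟫),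
      integral_const_mul (η ^ 2) (fun ω => ‖gt ω‖ ^ 2)]
  -- the expected inner product bound
  have key4 : μ₀ * ∫ ω, ‖w ω - wstar‖ ^ 2 ∂P ≤ ∫ ω, ⟪gt ω, w ω - wstar⟫ ∂P := by
    have e1 : ∫ ω, ⟪gt ω, w ω - wstar⟫ ∂P
        = ∑ s ∈ S, ∫ ω, inds s (x ω) * φ s (w ω) ∂P := by
      rw [integral_congr_ae (ae_of_all _ hfinner_eq)]
      exact integral_finset_sum S hint4
    have e2 : ∀ s ∈ S, ∫ ω, inds s (x ω) * φ s (w ω) ∂P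
        = (S.card : ℝ)⁻¹ * ∫ ω, φ s (w ω) ∂P := by
      intro s hs
      have := ProbabilityTheory.IndepFun.integral_mul_eq_mul_integral (hindepf s hs)
        (((hindsmeas s).comp hxmeas).aestronglyMeasurable)
        (((hφmeas s).comp hwm).aestronglyMeasurable)
      calc ∫ ω, inds s (x ω) * φ s (w ω) ∂P
          = (∫ ω, inds s (x ω) ∂P) * ∫ ω, φ s (w ω) ∂P := this
        _ = (S.card : ℝ)⁻¹ * ∫ ω, φ s (w ω) ∂P := by rw [hindint s hs]
    have e3 : ∫ ω, ⟪gt ω, w ω - wstar⟫ ∂P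
        = ∫ ω, ⟪gradient L (w ω), w ω - wstar⟫ ∂P := by
      rw [e1, Finset.sum_congr rfl e2, ← Finset.mul_sum,
        ← integral_finset_sum S hint5, ← integral_const_mul]
      exact integral_congr_ae (ae_of_all _ fun ω => (hgradinner (w ω)).symm)
    have hgradint : Integrable (fun ω => ⟪gradient L (w ω), w ω - wstar⟫) P := by
      have : (fun ω => ⟪gradient L (w ω), w ω - wstar⟫)
          = fun ω => (S.card : ℝ)⁻¹ * ∑ s ∈ S, φ s (w ω) := by
        funext ω; exact hgradinner (w ω)
      rw [this]
      exact (integrable_finset_sum S hint5).const_mul _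
    rw [e3, ← integral_const_mul]
    exact integral_mono (hint1.const_mul μ₀) hgradint (fun ω => hmono (w ω) (hwW ω))
  -- the gradient norm bound
  have key5 : ∫ ω, ‖gt ω‖ ^ 2 ∂P ≤ G ^ 2 := by
    calc ∫ ω, ‖gt ω‖ ^ 2 ∂P ≤ ∫ _ω, G ^ 2 ∂P :=
          integral_mono hint2 (integrable_const _)
            (fun ω => pow_le_pow_left₀ (norm_nonneg _) (hgt_norm ω) 2)
      _ = G ^ 2 := by simp
  -- conclusion
  have hμint : 0 ≤ 2 * η := by linarith
  have e4 : 2 * η * (μ₀ * ∫ ω, ‖w ω - wstar‖ ^ 2 ∂P)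
      ≤ 2 * η * ∫ ω, ⟪gt ω, w ω - wstar⟫ ∂P :=
    mul_le_mul_of_nonneg_left key4 hμint
  have e5 : η ^ 2 * ∫ ω, ‖gt ω‖ ^ 2 ∂P ≤ η ^ 2 * G ^ 2 :=
    mul_le_mul_of_nonneg_left key5 (sq_nonneg η)
  calc ∫ ω, ‖w' ω - wstar‖ ^ 2 ∂P
      ≤ (∫ ω, ‖w ω - wstar‖ ^ 2 ∂P) - 2 * η * (∫ ω, ⟪gt ω, w ω - wstar⟫ ∂P)
        + η ^ 2 * (∫ ω, ‖gt ω‖ ^ 2 ∂P) := by rw [← key3]; exact key2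
    _ ≤ (1 - 2 * η * μ₀) * ∫ ω, ‖w ω - wstar‖ ^ 2 ∂P + η ^ 2 * G ^ 2 := by nlinarith
end

section
/- Let N ≥ 1 be an integer, C ≥ 0, and let (b_j)_{j≥1} be a sequence of nonnegative real numbers such that b_{j+1} ≤ (1 − 4/(N+j))·b_j + C/(N+j)² for every integer j ≥ 1. Then for every integer j ≥ 1, b_j ≤ (N²·b₁ + C·(j−1))/(N+j−1)². -/
lemma key_step (m A C x : ℝ) (hm : 2 ≤ m) (hA : 0 ≤ A) (hC : 0 ≤ C) (hx : 0 ≤ x)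
    (h : x ≤ A / (m - 1) ^ 2) : (1 - 4 / m) * x + C / m ^ 2 ≤ (A + C) / m ^ 2 := by
  have hm0 : (0:ℝ) < m := by linarith
  have hm1 : (0:ℝ) < m - 1 := by linarith
  have h1 : x * (m - 1) ^ 2 ≤ A := (le_div_iff₀ (by positivity)).mp h
  have h2 : (1 - 4 / m) * x ≤ A / m ^ 2 := by
    rw [le_div_iff₀ (by positivity)]
    have he : (1 - 4 / m) * x * m ^ 2 = x * (m ^ 2 - 4 * m) := by
      field_simp
    rw [he]
    have h3 : m ^ 2 - 4 * m ≤ (m - 1) ^ 2 := by nlinarith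
    nlinarith [mul_le_mul_of_nonneg_left h3 hx]
  calc (1 - 4 / m) * x + C / m ^ 2 ≤ A / m ^ 2 + C / m ^ 2 := by linarith
    _ = (A + C) / m ^ 2 := by rw [← add_div]

/-- Let `N ≥ 1` be an integer, `C ≥ 0`, and `(b_j)_{j≥1}` nonnegative with
`b_{j+1} ≤ (1 − 4/(N+j))·b_j + C/(N+j)²` for every `j ≥ 1`. Then for every `j ≥ 1`,
`b_j ≤ (N²·b₁ + C·(j−1))/(N+j−1)²`. -/
theorem stmt_9 (N : ℕ) (hN : 1 ≤ N) (C : ℝ) (hC : 0 ≤ C) (b : ℕ → ℝ)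
    (hnonneg : ∀ j : ℕ, 1 ≤ j → 0 ≤ b j)
    (hrec : ∀ j : ℕ, 1 ≤ j →
      b (j + 1) ≤ (1 - 4 / ((N : ℝ) + (j : ℝ))) * b j + C / ((N : ℝ) + (j : ℝ)) ^ 2) :
    ∀ j : ℕ, 1 ≤ j →
      b j ≤ ((N : ℝ) ^ 2 * b 1 + C * ((j : ℝ) - 1)) / ((N : ℝ) + (j : ℝ) - 1) ^ 2 := by
  have hNp : (0:ℝ) < N := by exact_mod_cast hN
  intro j hj
  induction j with
  | zero => omega
  | succ k ih =>
    rcases Nat.lt_or_ge k 1 with hk | hk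
    · -- k = 0, base case j = 1
      interval_cases k
      push_cast
      have hN0 : (N:ℝ) ≠ 0 := ne_of_gt hNp
      have heq : ((N:ℝ) ^ 2 * b 1 + C * (1 - 1)) / ((N:ℝ) + 1 - 1) ^ 2 = b 1 := by
        rw [sub_self, mul_zero, add_zero, add_sub_cancel_right]
        field_simp
      rw [heq]
    · have ihk := ih hk
      have hrecc := hrec k hk
      have hk1 : (1:ℝ) ≤ (k:ℝ) := by exact_mod_cast hk
      have hb1 : 0 ≤ b 1 := hnonneg 1 le_rfl
      have hA : 0 ≤ (N:ℝ) ^ 2 * b 1 + C * ((k:ℝ) - 1) := by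
        have : 0 ≤ C * ((k:ℝ) - 1) := mul_nonneg hC (by linarith)
        positivity
      have hN1 : (1:ℝ) ≤ (N:ℝ) := by exact_mod_cast hN
      have hm : (2:ℝ) ≤ (N:ℝ) + (k:ℝ) := by linarith
      have hkey := key_step ((N:ℝ) + (k:ℝ)) ((N:ℝ) ^ 2 * b 1 + C * ((k:ℝ) - 1)) C (b k)
        hm hA hC (hnonneg k hk) (by
          have : (N:ℝ) + (k:ℝ) - 1 = (N:ℝ) + (k:ℝ) - 1 := rfl
          convert ihk using 2)
      have hle : b (k + 1) ≤ ((N:ℝ) ^ 2 * b 1 + C * ((k:ℝ) - 1) + C) / ((N:ℝ) + (k:ℝ)) ^ 2 :=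
        le_trans hrecc hkey
      push_cast
      have e1 : (N:ℝ) + ((k:ℝ) + 1) - 1 = (N:ℝ) + (k:ℝ) := by ring
      have e2 : (N:ℝ) ^ 2 * b 1 + C * ((k:ℝ) + 1 - 1) =
          (N:ℝ) ^ 2 * b 1 + C * ((k:ℝ) - 1) + C := by ring
      rw [e1, e2]
      exact hle
end

section
/- Let τ ≥ 2 be an integer, R ≥ 0, b ≥ 0, and let (u_j)_{j≥1} be a sequence of nonnegative real numbers such that u_j ≤ τR/j for all integers 1 ≤ j ≤ τ, and u_{j+1} ≤ (1 − 2/j)·u_j + b/j² for every integer j ≥ τ. Then u_j ≤ max{τR, b}/j for every integer j ≥ 1. -/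
/-- Let `τ ≥ 2` be an integer, `R ≥ 0`, `b ≥ 0`, and `(u_j)_{j≥1}` nonnegative
with `u_j ≤ τR/j` for all `1 ≤ j ≤ τ` and `u_{j+1} ≤ (1 − 2/j)·u_j + b/j²` for every `j ≥ τ`.
Then `u_j ≤ max{τR, b}/j` for every `j ≥ 1`. -/
theorem stmt_13 (τ : ℕ) (hτ : 2 ≤ τ) (R b : ℝ) (hR : 0 ≤ R) (hb : 0 ≤ b)
    (u : ℕ → ℝ) (hnonneg : ∀ j : ℕ, 1 ≤ j → 0 ≤ u j)
    (hinit : ∀ j : ℕ, 1 ≤ j → j ≤ τ → u j ≤ (τ : ℝ) * R / (j : ℝ))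
    (hrec : ∀ j : ℕ, τ ≤ j → u (j + 1) ≤ (1 - 2 / (j : ℝ)) * u j + b / (j : ℝ) ^ 2) :
    ∀ j : ℕ, 1 ≤ j → u j ≤ max ((τ : ℝ) * R) b / (j : ℝ) := by
  set M : ℝ := max ((τ : ℝ) * R) b with hM
  have hMb : b ≤ M := le_max_right _ _
  have htail : ∀ j : ℕ, τ ≤ j → u j ≤ M / (j : ℝ) := by
    intro j hj
    induction j, hj using Nat.le_induction with
    | base =>
      calc u τ ≤ (τ : ℝ) * R / (τ : ℝ) := hinit τ (by omega) le_rfl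
        _ ≤ M / (τ : ℝ) := by
          gcongr
          exact le_max_left _ _
    | succ j hj ih =>
      have hj2 : (2 : ℝ) ≤ (j : ℝ) := by exact_mod_cast by omega
      have hjpos : (0 : ℝ) < (j : ℝ) := by linarith
      have hcoef : (0 : ℝ) ≤ 1 - 2 / (j : ℝ) := by
        rw [sub_nonneg, div_le_one hjpos]; exact hj2
      have hMnn : 0 ≤ M := le_trans hb hMb
      calc u (j + 1) ≤ (1 - 2 / (j : ℝ)) * u j + b / (j : ℝ) ^ 2 := hrec j hj
        _ ≤ (1 - 2 / (j : ℝ)) * (M / (j : ℝ)) + M / (j : ℝ) ^ 2 := by gcongr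
        _ = M / (j : ℝ) - M / (j : ℝ) ^ 2 := by field_simp; ring
        _ ≤ M / ((j : ℝ) + 1) := by
          rw [div_sub_div _ _ (ne_of_gt hjpos) (by positivity),
            div_le_div_iff₀ (by positivity) (by positivity)]
          nlinarith [sq_nonneg ((j : ℝ))]
        _ = M / ((j + 1 : ℕ) : ℝ) := by push_cast; ring
  intro j hj
  rcases le_or_gt j τ with h | h
  · calc u j ≤ (τ : ℝ) * R / (j : ℝ) := hinit j hj h
      _ ≤ M / (j : ℝ) := by
        gcongr
        exact le_max_left _ _
  · exact htail j h.le
end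

section
/- Let w be a W-valued square-integrable random vector measurable with respect to a sub-σ-algebra F, let x be uniformly distributed on the finite set S and independent of F, let g := ∇ℓ(w;x), and let η > 0. Suppose each ℓ(·;x) is twice continuously differentiable, w* ∈ W satisfies ∇L(w*) = 0, and ‖∇²ℓ(v;x) − ∇²ℓ(w*;x)‖ ≤ H‖v − w*‖ for all (v,x) ∈ W×S. Then ‖E[w − ηg] − w*‖ ≤ ‖I − η∇²L(w*)‖·‖E[w] − w*‖ + ηH·E[‖w − w*‖²], where ‖I − η∇²L(w*)‖ is the operator norm. -/
set_option maxHeartbeats 1000000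

open MeasureTheory ProbabilityTheory

section AuxLemmas

variable {d : ℕ}

lemma aux_integrable_comp {Ω : Type} {m0 : MeasurableSpace Ω} (μ : Measure Ω)
    [IsProbabilityMeasure μ] {G : Type*} [NormedAddCommGroup G]
    [MeasurableSpace G] [BorelSpace G] [SecondCountableTopology G]
    {W : Set (EuclideanSpace ℝ (Fin d))} (hWcomp : IsCompact W)
    {φ : EuclideanSpace ℝ (Fin d) → G} (hφ : Continuous φ)
    {w : Ω → EuclideanSpace ℝ (Fin d)} (hw : Measurable w) (hwW : ∀ ω, w ω ∈ W) :
    Integrable (fun ω => φ (w ω)) μ := by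
  obtain ⟨C, hC⟩ := hWcomp.exists_bound_of_continuousOn hφ.continuousOn
  refine Integrable.mono' (integrable_const C) ?_ ?_
  · exact ((hφ.measurable).comp hw).aestronglyMeasurable
  · exact .of_forall fun ω => hC _ (hwW ω)

lemma aux_integral_smul_indep {Ω : Type} {m0 : MeasurableSpace Ω} {μ : Measure Ω}
    [IsProbabilityMeasure μ] {f : Ω → ℝ} {v : Ω → EuclideanSpace ℝ (Fin d)}
    (h : IndepFun f v μ) (hf : Integrable f μ) (hv : Integrable v μ) :
    ∫ ω, f ω • v ω ∂μ = (∫ ω, f ω ∂μ) • ∫ ω, v ω ∂μ := by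
  have h' : IndepFun (fun ω => ‖f ω‖) (fun ω => ‖v ω‖) μ :=
    h.comp measurable_norm measurable_norm
  have hmul : Integrable (fun ω => ‖f ω‖ * ‖v ω‖) μ := h'.integrable_mul hf.norm hv.norm
  have hsm : Integrable (fun ω => f ω • v ω) μ := by
    refine Integrable.mono' hmul
      (hf.aestronglyMeasurable.smul hv.aestronglyMeasurable)
      (.of_forall fun ω => le_of_eq (norm_smul _ _))
  ext i
  set P := (EuclideanSpace.proj i : EuclideanSpace ℝ (Fin d) →L[ℝ] ℝ) with hP
  have main : P (∫ ω, f ω • v ω ∂μ)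
      = P ((∫ ω, f ω ∂μ) • ∫ ω, v ω ∂μ) := ?_
  · simpa [hP, PiLp.proj_apply] using main
  rw [← ContinuousLinearMap.integral_comp_comm P hsm]
  have hvi : Integrable (fun ω => P (v ω)) μ :=
    ContinuousLinearMap.integrable_comp P hv
  have hind : IndepFun f (fun ω => P (v ω)) μ :=
    h.comp measurable_id P.measurable
  have h1 : ∫ ω, P (f ω • v ω) ∂μ
      = ∫ ω, f ω * P (v ω) ∂μ := by
    simp only [_root_.map_smul, smul_eq_mul]
  rw [h1]
  have h2 : ∫ ω, f ω * P (v ω) ∂μ = (∫ ω, f ω ∂μ) * ∫ ω, P (v ω) ∂μ :=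
    hind.integral_fun_mul_eq_mul_integral hf.aestronglyMeasurable hvi.aestronglyMeasurable
  rw [h2, _root_.map_smul, smul_eq_mul, ← ContinuousLinearMap.integral_comp_comm P hv]

lemma aux_taylor {G : EuclideanSpace ℝ (Fin d) → EuclideanSpace ℝ (Fin d)}
    {W : Set (EuclideanSpace ℝ (Fin d))} (hWconv : Convex ℝ W)
    {wstar : EuclideanSpace ℝ (Fin d)} (hws : wstar ∈ W)
    (hGdiff : Differentiable ℝ G) {H : ℝ} (hH : 0 ≤ H)
    (hlip : ∀ v ∈ W, ‖fderiv ℝ G v - fderiv ℝ G wstar‖ ≤ H * ‖v - wstar‖)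
    {v : EuclideanSpace ℝ (Fin d)} (hv : v ∈ W) :
    ‖G v - G wstar - (fderiv ℝ G wstar) (v - wstar)‖ ≤ H * ‖v - wstar‖ ^ 2 := by
  set A := fderiv ℝ G wstar with hA
  set s : Set (EuclideanSpace ℝ (Fin d)) := segment ℝ wstar v with hs
  have hsub : s ⊆ W := hWconv.segment_subset hws hv
  have hseg : ∀ u ∈ s, ‖u - wstar‖ ≤ ‖v - wstar‖ := by
    intro u hu
    obtain ⟨a, b, ha, hb, hab, rfl⟩ := hu
    have : a • wstar + b • v - wstar = b • (v - wstar) := by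
      have : a = 1 - b := by linarith
      rw [this]; module
    rw [this, norm_smul, Real.norm_eq_abs, abs_of_nonneg hb]
    nlinarith [norm_nonneg (v - wstar)]
  have key := Convex.norm_image_sub_le_of_norm_hasFDerivWithin_le
    (f := fun u => G u - A u) (f' := fun u => fderiv ℝ G u - A) (C := H * ‖v - wstar‖)
    (fun u hu => (((hGdiff u).hasFDerivAt.sub A.hasFDerivAt).hasFDerivWithinAt))
    (fun u hu => le_trans (hlip u (hsub hu))
      (mul_le_mul_of_nonneg_left (hseg u hu) hH))
    (convex_segment _ _) (left_mem_segment ℝ wstar v) (right_mem_segment ℝ wstar v)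
  have heq : G v - A v - (G wstar - A wstar) = G v - G wstar - A (v - wstar) := by
    rw [map_sub]; abel
  rw [heq] at key
  calc ‖G v - G wstar - A (v - wstar)‖ ≤ H * ‖v - wstar‖ * ‖v - wstar‖ := key
    _ = H * ‖v - wstar‖ ^ 2 := by ring

end AuxLemmas

open MeasureTheory ProbabilityTheory

/-- One-step bias bound. If `w` is a `W`-valued square-integrable `F`-measurable
random vector, `x` is uniform on the finite set `S` and independent of `F`, `g := ∇ℓ(w;x)`,
`η > 0`, each `ℓ(·;x)` is C², `w* ∈ W` satisfies `∇L(w*) = 0`, and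
`‖∇²ℓ(v;x) − ∇²ℓ(w*;x)‖ ≤ H‖v − w*‖` on `W×S`, then
`‖E[w − ηg] − w*‖ ≤ ‖I − η∇²L(w*)‖·‖E[w] − w*‖ + ηH·E[‖w − w*‖²]`. -/
theorem stmt_15 {d : ℕ}
    (S : Finset (EuclideanSpace ℝ (Fin d))) (hS : S.Nonempty)
    (ℓ : EuclideanSpace ℝ (Fin d) → EuclideanSpace ℝ (Fin d) → ℝ)
    (hsmooth : ∀ x ∈ S, ContDiff ℝ 2 (fun w => ℓ w x))
    (L : EuclideanSpace ℝ (Fin d) → ℝ)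
    (hLdef : L = fun w => (S.card : ℝ)⁻¹ * ∑ x ∈ S, ℓ w x)
    (W : Set (EuclideanSpace ℝ (Fin d)))
    (hWconv : Convex ℝ W) (hWcomp : IsCompact W) (hWne : W.Nonempty)
    (wstar : EuclideanSpace ℝ (Fin d)) (hwstarW : wstar ∈ W)
    (hcrit : gradient L wstar = 0)
    (H : ℝ) (hH : 0 ≤ H)
    (hlip : ∀ v ∈ W, ∀ x ∈ S,
      ‖fderiv ℝ (gradient (fun u => ℓ u x)) v - fderiv ℝ (gradient (fun u => ℓ u x)) wstar‖
        ≤ H * ‖v - wstar‖)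
    {Ω : Type} {m0 : MeasurableSpace Ω} (μ : Measure Ω) [IsProbabilityMeasure μ]
    (F : MeasurableSpace Ω) (hF : F ≤ m0)
    (w : Ω → EuclideanSpace ℝ (Fin d)) (hwF : Measurable[F] w) (hwW : ∀ ω, w ω ∈ W)
    (hwL2 : MeasureTheory.MemLp (α := Ω) (m0 := m0) w 2 μ)
    (x : Ω → EuclideanSpace ℝ (Fin d)) (hxmeas : Measurable[m0] x)
    (hxunif : @MeasureTheory.Measure.map Ω _ m0 _ x μ
      = (S.card : ENNReal)⁻¹ • ∑ s ∈ S, (Measure.dirac s : Measure (EuclideanSpace ℝ (Fin d))))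
    (hindep : Indep (MeasurableSpace.comap x inferInstance) F μ)
    (η : ℝ) (hη : 0 < η)
    (g : Ω → EuclideanSpace ℝ (Fin d))
    (hg : ∀ ω, g ω = gradient (fun u => ℓ u (x ω)) (w ω)) :
    ‖(∫ ω, (w ω - η • g ω) ∂μ) - wstar‖
      ≤ ‖ContinuousLinearMap.id ℝ (EuclideanSpace ℝ (Fin d)) - η • fderiv ℝ (gradient L) wstar‖
          * ‖(∫ ω, w ω ∂μ) - wstar‖
        + η * H * ∫ ω, ‖w ω - wstar‖ ^ 2 ∂μ := by
  classical
  letI : MeasurableSpace Ω := m0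
  set c : ℝ := (S.card : ℝ)⁻¹ with hc
  have hcard : (0:ℝ) < S.card := by exact_mod_cast Finset.card_pos.mpr hS
  have hc0 : 0 < c := by positivity
  set T := (InnerProductSpace.toDual ℝ (EuclideanSpace ℝ (Fin d))).symm with hT
  set Gs : EuclideanSpace ℝ (Fin d) → EuclideanSpace ℝ (Fin d) → EuclideanSpace ℝ (Fin d) :=
    fun s v => gradient (fun u => ℓ u s) v with hGs
  have hdiff : ∀ s ∈ S, Differentiable ℝ (fun u => ℓ u s) :=
    fun s hs => (hsmooth s hs).differentiable two_ne_zero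
  have hGsC1 : ∀ s ∈ S, ContDiff ℝ 1 (Gs s) := by
    intro s hs
    have h1 : ContDiff ℝ 1 (fderiv ℝ (fun u => ℓ u s)) :=
      (hsmooth s hs).fderiv_right (le_refl 2)
    exact (T.toContinuousLinearEquiv.toContinuousLinearMap.contDiff).comp h1
  have hGsdiff : ∀ s ∈ S, Differentiable ℝ (Gs s) :=
    fun s hs => (hGsC1 s hs).differentiable one_ne_zero
  have hLfd : ∀ v, HasFDerivAt L (c • ∑ s ∈ S, fderiv ℝ (fun u => ℓ u s) v) v := by
    intro v
    rw [hLdef]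
    exact (HasFDerivAt.fun_sum fun s hs => ((hdiff s hs) v).hasFDerivAt).const_mul c
  have hgradL : ∀ v, gradient L v = c • ∑ s ∈ S, Gs s v := by
    intro v
    show T (fderiv ℝ L v) = _
    rw [(hLfd v).fderiv, _root_.map_smul, map_sum]
    rfl
  have hgL : gradient L = fun v => c • ∑ s ∈ S, Gs s v := funext hgradL
  have hGLd : ∀ v, HasFDerivAt (gradient L) (c • ∑ s ∈ S, fderiv ℝ (Gs s) v) v := by
    intro v; rw [hgL]
    exact (HasFDerivAt.fun_sum fun s hs => ((hGsdiff s hs) v).hasFDerivAt).fun_const_smul c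
  have hGLdiff : Differentiable ℝ (gradient L) := fun v => (hGLd v).differentiableAt
  have hGLfd : ∀ v, fderiv ℝ (gradient L) v = c • ∑ s ∈ S, fderiv ℝ (Gs s) v :=
    fun v => (hGLd v).fderiv
  have hlipL : ∀ v ∈ W,
      ‖fderiv ℝ (gradient L) v - fderiv ℝ (gradient L) wstar‖ ≤ H * ‖v - wstar‖ := by
    intro v hv
    rw [hGLfd, hGLfd, show c • ∑ s ∈ S, fderiv ℝ (Gs s) v - c • ∑ s ∈ S, fderiv ℝ (Gs s) wstar
      = c • (∑ s ∈ S, fderiv ℝ (Gs s) v - ∑ s ∈ S, fderiv ℝ (Gs s) wstar) from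
      (smul_sub _ _ _).symm, ← Finset.sum_sub_distrib]
    rw [norm_smul, Real.norm_eq_abs, abs_of_pos hc0]
    calc c * ‖∑ s ∈ S, (fderiv ℝ (Gs s) v - fderiv ℝ (Gs s) wstar)‖
        ≤ c * ∑ s ∈ S, ‖fderiv ℝ (Gs s) v - fderiv ℝ (Gs s) wstar‖ :=
          mul_le_mul_of_nonneg_left (norm_sum_le _ _) hc0.le
      _ ≤ c * ∑ s ∈ S, (H * ‖v - wstar‖) := by
          refine mul_le_mul_of_nonneg_left ?_ hc0.le
          exact Finset.sum_le_sum fun s hs => hlip v hv s hs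
      _ = H * ‖v - wstar‖ := by
          rw [Finset.sum_const, nsmul_eq_mul, hc]
          field_simp
  set A := fderiv ℝ (gradient L) wstar with hA
  have hTay : ∀ v ∈ W, ‖gradient L v - A (v - wstar)‖ ≤ H * ‖v - wstar‖ ^ 2 := by
    intro v hv
    have := aux_taylor hWconv hwstarW hGLdiff hH hlipL hv
    rwa [hcrit, sub_zero] at this
  have hw0 : Measurable[m0] w := fun s hs => hF _ (hwF hs)
  have hGscont : ∀ s ∈ S, Continuous (Gs s) := fun s hs => (hGsC1 s hs).continuous
  have hGLcont : Continuous (gradient L) := by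
    rw [hgL]
    exact (continuous_finset_sum _ fun s hs => hGscont s hs).const_smul c
  set r : EuclideanSpace ℝ (Fin d) → EuclideanSpace ℝ (Fin d) :=
    fun v => gradient L v - A (v - wstar) with hr
  have hrcont : Continuous r :=
    hGLcont.sub (A.continuous.comp (continuous_id.sub continuous_const))
  have hIw : Integrable w μ := aux_integrable_comp μ hWcomp continuous_id hw0 hwW
  have hIGs : ∀ s ∈ S, Integrable (fun ω => Gs s (w ω)) μ :=
    fun s hs => aux_integrable_comp μ hWcomp (hGscont s hs) hw0 hwW
  have hIGL : Integrable (fun ω => gradient L (w ω)) μ :=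
    aux_integrable_comp μ hWcomp hGLcont hw0 hwW
  have hIr : Integrable (fun ω => r (w ω)) μ := aux_integrable_comp μ hWcomp hrcont hw0 hwW
  have hIA : Integrable (fun ω => A (w ω - wstar)) μ :=
    aux_integrable_comp μ hWcomp (A.continuous.comp (continuous_id.sub continuous_const)) hw0 hwW
  have hInrm : Integrable (fun ω => ‖w ω - wstar‖ ^ 2) μ :=
    aux_integrable_comp μ hWcomp ((continuous_norm.comp (continuous_id.sub continuous_const)).pow 2) hw0 hwW
  -- measure facts
  have hxS : ∀ᵐ ω ∂μ, x ω ∈ S := by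
    have h0 : μ (x ⁻¹' (↑S : Set (EuclideanSpace ℝ (Fin d)))ᶜ) = 0 := by
      rw [← Measure.map_apply hxmeas S.measurableSet.compl, hxunif]
      simp only [Measure.smul_apply, Measure.coe_finset_sum, Finset.sum_apply, smul_eq_mul]
      have : ∀ s ∈ S, (Measure.dirac s) (↑S : Set (EuclideanSpace ℝ (Fin d)))ᶜ = 0 := by
        intro s hs
        rw [Measure.dirac_apply' _ S.measurableSet.compl]
        simp [hs]
      rw [Finset.sum_congr rfl this]
      simp
    rw [ae_iff]
    exact h0
  have hPs : ∀ s ∈ S, μ (x ⁻¹' {s}) = (S.card : ENNReal)⁻¹ := by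
    intro s hs
    rw [← Measure.map_apply hxmeas (measurableSet_singleton s), hxunif]
    simp only [Measure.smul_apply, Measure.coe_finset_sum, Finset.sum_apply, smul_eq_mul]
    have : ∀ t ∈ S, (Measure.dirac t) ({s} : Set (EuclideanSpace ℝ (Fin d)))
        = if t = s then 1 else 0 := by
      intro t ht
      rw [Measure.dirac_apply' _ (measurableSet_singleton s)]
      by_cases h : t = s <;> simp [h]
    rw [Finset.sum_congr rfl this, Finset.sum_ite_eq' S s (fun _ => (1 : ENNReal)), if_pos hs,
      mul_one]
  have hIndepxw : IndepFun x w μ :=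
    Kernel.indep_of_indep_of_le_right hindep (measurable_iff_comap_le.mp hwF)
  -- indicator functions
  set fs : EuclideanSpace ℝ (Fin d) → Ω → ℝ :=
    fun s ω => if x ω = s then (1:ℝ) else 0 with hfs
  have hfsmeas : ∀ s : EuclideanSpace ℝ (Fin d), Measurable (fs s) := by
    intro s
    exact Measurable.ite (hxmeas (measurableSet_singleton s)) measurable_const measurable_const
  have hIfs : ∀ s : EuclideanSpace ℝ (Fin d), Integrable (fs s) μ := by
    intro s
    refine Integrable.mono' (integrable_const (1:ℝ)) (hfsmeas s).aestronglyMeasurable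
      (.of_forall fun ω => ?_)
    by_cases h : x ω = s <;> simp [hfs, h]
  have hintfs : ∀ s ∈ S, ∫ ω, fs s ω ∂μ = c := by
    intro s hs
    have heq : fs s = (x ⁻¹' {s}).indicator (fun _ => (1:ℝ)) := by
      funext ω; simp [hfs, Set.indicator_apply, Set.mem_preimage]
    rw [heq, integral_indicator_const (1:ℝ) (hxmeas (measurableSet_singleton s)), measureReal_def, hPs s hs]
    simp [hc]
  have hIndfs : ∀ s ∈ S, IndepFun (fs s) (fun ω => Gs s (w ω)) μ := by
    intro s hs
    have hφ : Measurable (fun y : EuclideanSpace ℝ (Fin d) => if y = s then (1:ℝ) else 0) :=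
      Measurable.ite (measurableSet_eq) measurable_const measurable_const
    exact hIndepxw.comp hφ (hGscont s hs).measurable
  have hIsummand : ∀ s ∈ S, Integrable (fun ω => fs s ω • Gs s (w ω)) μ := by
    intro s hs
    refine Integrable.mono' ((hIGs s hs).norm)
      (((hfsmeas s).aestronglyMeasurable).smul (hIGs s hs).aestronglyMeasurable)
      (.of_forall fun ω => ?_)
    rw [norm_smul]
    by_cases h : x ω = s <;> simp [hfs, h]
  have hgae : g =ᵐ[μ] fun ω => ∑ s ∈ S, fs s ω • Gs s (w ω) := by
    filter_upwards [hxS] with ω hω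
    rw [hg ω]
    have : ∀ s ∈ S, fs s ω • Gs s (w ω) = if x ω = s then Gs s (w ω) else 0 := by
      intro s hs
      by_cases h : x ω = s <;> simp [hfs, h]
    rw [Finset.sum_congr rfl this, Finset.sum_ite_eq S (x ω) (fun s => Gs s (w ω)), if_pos hω]
  have hIg : Integrable g μ :=
    (integrable_finset_sum S hIsummand).congr hgae.symm
  have hintg : ∫ ω, g ω ∂μ = ∫ ω, gradient L (w ω) ∂μ := by
    rw [integral_congr_ae hgae, integral_finset_sum S hIsummand]
    have : ∀ s ∈ S, ∫ ω, fs s ω • Gs s (w ω) ∂μ = c • ∫ ω, Gs s (w ω) ∂μ := by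
      intro s hs
      rw [aux_integral_smul_indep (hIndfs s hs) (hIfs s) (hIGs s hs), hintfs s hs]
    rw [Finset.sum_congr rfl this, ← Finset.smul_sum,
      ← integral_finset_sum S hIGs, ← integral_smul]
    congr 1
    funext ω
    rw [hgradL]
  -- main computation
  set I1 := ∫ ω, w ω ∂μ with hI1
  have hAint : ∫ ω, A (w ω - wstar) ∂μ = A (I1 - wstar) := by
    have hsubI : Integrable (fun ω => w ω - wstar) μ := hIw.sub (integrable_const wstar)
    rw [A.integral_comp_comm hsubI, integral_sub hIw (integrable_const wstar), integral_const,
      probReal_univ, one_smul]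
  have hdecomp : ∫ ω, gradient L (w ω) ∂μ = A (I1 - wstar) + ∫ ω, r (w ω) ∂μ := by
    have heq : (fun ω => gradient L (w ω)) = fun ω => A (w ω - wstar) + r (w ω) := by
      funext ω; simp only [hr]; abel
    rw [heq, integral_add hIA hIr, hAint]
  have hintsub : ∫ ω, (w ω - η • g ω) ∂μ = I1 - η • ∫ ω, g ω ∂μ := by
    have h2 : Integrable (fun ω => η • g ω) μ := hIg.smul η
    rw [integral_sub hIw h2, integral_smul]
  have hfinal : (∫ ω, (w ω - η • g ω) ∂μ) - wstar
      = (ContinuousLinearMap.id ℝ (EuclideanSpace ℝ (Fin d)) - η • A) (I1 - wstar)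
        - η • ∫ ω, r (w ω) ∂μ := by
    rw [hintsub, hintg, hdecomp]
    simp only [ContinuousLinearMap.sub_apply, ContinuousLinearMap.smul_apply,
      ContinuousLinearMap.id_apply, smul_add]
    abel
  rw [hfinal]
  have hnormr : ‖∫ ω, r (w ω) ∂μ‖ ≤ H * ∫ ω, ‖w ω - wstar‖ ^ 2 ∂μ := by
    calc ‖∫ ω, r (w ω) ∂μ‖ ≤ ∫ ω, ‖r (w ω)‖ ∂μ := norm_integral_le_integral_norm _
      _ ≤ ∫ ω, H * ‖w ω - wstar‖ ^ 2 ∂μ := by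
          refine integral_mono hIr.norm (hInrm.const_mul H) fun ω => ?_
          exact hTay (w ω) (hwW ω)
      _ = H * ∫ ω, ‖w ω - wstar‖ ^ 2 ∂μ := integral_const_mul H _
  calc ‖(ContinuousLinearMap.id ℝ (EuclideanSpace ℝ (Fin d)) - η • A) (I1 - wstar)
        - η • ∫ ω, r (w ω) ∂μ‖
      ≤ ‖(ContinuousLinearMap.id ℝ (EuclideanSpace ℝ (Fin d)) - η • A) (I1 - wstar)‖
        + ‖η • ∫ ω, r (w ω) ∂μ‖ := norm_sub_le _ _
    _ ≤ ‖ContinuousLinearMap.id ℝ (EuclideanSpace ℝ (Fin d)) - η • A‖ * ‖I1 - wstar‖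
        + η * (H * ∫ ω, ‖w ω - wstar‖ ^ 2 ∂μ) := by
        refine add_le_add (ContinuousLinearMap.le_opNorm _ _) ?_
        rw [norm_smul, Real.norm_eq_abs, abs_of_pos hη]
        exact mul_le_mul_of_nonneg_left hnormr hη.le
    _ = ‖ContinuousLinearMap.id ℝ (EuclideanSpace ℝ (Fin d)) - η • A‖ * ‖I1 - wstar‖
        + η * H * ∫ ω, ‖w ω - wstar‖ ^ 2 ∂μ := by ring
end
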